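/- arXiv:1411.5661 — 8 statements merged into one kernel-verified Lean document; each statement's English description precedes it below -/
import Mathlib

section
/- For every positive integer n, W(K_{2n}) = 2n - 1 + σ_n, where σ_n is the maximum number of splitted perfect matchings over all 1-factorizations of the complete graph K_{2n}. -/
/-- An interval `t`-coloring of the complete graph on `Fin m`:
a proper edge-coloring with colors in `{1,…,t}`, using every color,
such that the spectrum (set of colors incident to each vertex) is an
interval of consecutive integers. -/
def IsIntervalColoring (m t : ℕ) (c : Sym2 (Fin m) → ℕ) : Prop :=
  (∀ u v w : Fin m, u ≠ v → u ≠ w → v ≠ w → c s(u, v) ≠ c s(u, w)) ∧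
  (∀ u v : Fin m, u ≠ v → c s(u, v) ∈ Finset.Icc 1 t) ∧
  (∀ k : ℕ, 1 ≤ k → k ≤ t → ∃ u v : Fin m, u ≠ v ∧ c s(u, v) = k) ∧
  (∀ v : Fin m, ∃ a b : ℕ,
    {k : ℕ | ∃ u : Fin m, u ≠ v ∧ c s(u, v) = k} = Set.Icc a b)

/-- `W m` is the greatest `t` for which the complete graph on `m` vertices
has an interval `t`-coloring. -/
noncomputable def W (m : ℕ) : ℕ :=
  sSup {t : ℕ | ∃ c : Sym2 (Fin m) → ℕ, IsIntervalColoring m t c}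

/-- A perfect matching of the complete graph on `Fin m`, given as a set of
(non-loop) edges covering every vertex exactly once. -/
def IsPerfectMatchingSet (m : ℕ) (F : Set (Sym2 (Fin m))) : Prop :=
  (∀ e ∈ F, ¬ e.IsDiag) ∧ (∀ v : Fin m, ∃! e, e ∈ F ∧ v ∈ e)

/-- A perfect matching of `K_{2n}` is splitted (w.r.t. the natural ordering of
`Fin (2*n)` into `n` consecutive pairs) if for some `i` with `1 ≤ i ≤ n-1`
every edge joins two vertices among the first `2*i` ones or two vertices
among the last `2*n - 2*i` ones. -/
def IsSplitted (n : ℕ) (F : Set (Sym2 (Fin (2 * n)))) : Prop :=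
  ∃ i : ℕ, 1 ≤ i ∧ i ≤ n - 1 ∧ ∀ u v : Fin (2 * n), s(u, v) ∈ F →
    (((u : ℕ) < 2 * i ∧ (v : ℕ) < 2 * i) ∨ (2 * i ≤ (u : ℕ) ∧ 2 * i ≤ (v : ℕ)))

/-- A 1-factorization of `K_{2n}`: a family of `2n-1` perfect matchings such
that every edge belongs to exactly one of them. -/
def IsOneFactorization (n : ℕ) (𝔉 : Fin (2 * n - 1) → Set (Sym2 (Fin (2 * n)))) : Prop :=
  (∀ j, IsPerfectMatchingSet (2 * n) (𝔉 j)) ∧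
  (∀ e : Sym2 (Fin (2 * n)), ¬ e.IsDiag → ∃! j, e ∈ 𝔉 j)

/-- `sigmaSplit n` is the maximum number of splitted perfect matchings over
all 1-factorizations of `K_{2n}`. -/
noncomputable def sigmaSplit (n : ℕ) : ℕ :=
  sSup {s : ℕ | ∃ 𝔉 : Fin (2 * n - 1) → Set (Sym2 (Fin (2 * n))),
    IsOneFactorization n 𝔉 ∧ {j : Fin (2 * n - 1) | IsSplitted n (𝔉 j)}.ncard = s}


/-!
Given a 1-factorization, order its factors by the position of their split, the unsplitted ones
last, and colour the `j`-th factor `j + 1`, except on the part of a splitted factor beyond its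
split, which gets `j + 2n`. The factors split before a vertex are then exactly the first few, so
every spectrum is an interval, and the largest colour is `2n - 1` plus the number of splitted
factors.

Conversely, in an interval `t`-colouring every spectrum consists of `2n - 1` consecutive colours,
so the colour classes modulo `2n - 1` form a 1-factorization. Order the vertices by the smallest
colour of their spectrum. Since `t ≤ 4n - 3`, for `1 ≤ j ≤ t - (2n - 1)` the class of `j` only
contains the colours `j` and `j + 2n - 1`; the first lie among the vertices whose spectrum starts
at most at `j`, the second among the others. Hence at least `t - (2n - 1)` classes are splitted.
-/

open Finset

section Coloring

variable {m : ℕ}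

def vertexSpectrum (c : Sym2 (Fin m) → ℕ) (v : Fin m) : Set ℕ :=
  {k | ∃ u, u ≠ v ∧ c s(u, v) = k}

def IsProperColoring (c : Sym2 (Fin m) → ℕ) : Prop :=
  ∀ u v w : Fin m, u ≠ v → u ≠ w → v ≠ w → c s(u, v) ≠ c s(u, w)

variable {c : Sym2 (Fin m) → ℕ}

theorem IsProperColoring.injOn (hc : IsProperColoring c) (v : Fin m) :
    Set.InjOn (fun u => c s(u, v)) {u | u ≠ v} := by
  intro u hu w hw huw
  by_contra hne
  exact hc v u w (Ne.symm hu) (Ne.symm hw) hne (by simpa only [Sym2.eq_swap] using huw)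

theorem IsProperColoring.ncard_vertexSpectrum (hc : IsProperColoring c) (v : Fin m) :
    (vertexSpectrum c v).ncard = m - 1 := by
  have : vertexSpectrum c v = (fun u => c s(u, v)) '' {u | u ≠ v} := by
    ext k; simp [vertexSpectrum]
  rw [this, (hc.injOn v).ncard_image, ← Set.compl_singleton_eq,
    Set.ncard_compl, Set.ncard_singleton, Nat.card_eq_fintype_card, Fintype.card_fin]

theorem IsProperColoring.vertexSpectrum_eq_Ico (hc : IsProperColoring c) {v : Fin m} {a b : ℕ}
    (h : vertexSpectrum c v = Set.Icc a b) : vertexSpectrum c v = Set.Ico a (a + (m - 1)) := by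
  have hcard := hc.ncard_vertexSpectrum v
  rw [h, Set.ncard_Icc_nat] at hcard
  ext k
  simp only [h, Set.mem_Icc, Set.mem_Ico]
  omega

theorem IsIntervalColoring.exists_vertexSpectrum_eq_Ico {t : ℕ} (hc : IsIntervalColoring m t c) :
    ∃ ℓ : Fin m → ℕ, ∀ v, vertexSpectrum c v = Set.Ico (ℓ v) (ℓ v + (m - 1)) := by
  choose a b hab using hc.2.2.2
  exact ⟨a, fun v => IsProperColoring.vertexSpectrum_eq_Ico hc.1 (hab v)⟩

theorem mem_Ico_of_vertexSpectrum_eq_Ico {d : ℕ} {ℓ : Fin m → ℕ}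
    (hℓ : ∀ v, vertexSpectrum c v = Set.Ico (ℓ v) (ℓ v + d)) {u v : Fin m} (huv : u ≠ v) :
    c s(u, v) ∈ Set.Ico (ℓ u) (ℓ u + d) ∧ c s(u, v) ∈ Set.Ico (ℓ v) (ℓ v + d) := by
  rw [← hℓ, ← hℓ]
  exact ⟨⟨v, huv.symm, by rw [Sym2.eq_swap]⟩, ⟨u, huv, rfl⟩⟩

theorem isIntervalColoring_of_vertexSpectrum {t : ℕ} (hc : IsProperColoring c)
    (hsub : ∀ v, vertexSpectrum c v ⊆ Set.Icc 1 t)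
    (hcover : ∀ k ∈ Set.Icc 1 t, ∃ v, k ∈ vertexSpectrum c v)
    (hint : ∀ v, ∃ a b, vertexSpectrum c v = Set.Icc a b) : IsIntervalColoring m t c := by
  refine ⟨hc, fun u v huv => ?_, fun k hk1 hkt => ?_, hint⟩
  · simpa using hsub v ⟨u, huv, rfl⟩
  · obtain ⟨v, u, huv, rfl⟩ := hcover k ⟨hk1, hkt⟩
    exact ⟨u, v, huv, rfl⟩

theorem IsProperColoring.isIntervalColoring (hc : IsProperColoring c)
    (hrange : ∀ u v : Fin m, u ≠ v → c s(u, v) ∈ Set.Icc 1 (m - 1)) :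
    IsIntervalColoring m (m - 1) c := by
  have hspec (v : Fin m) : vertexSpectrum c v = Set.Icc 1 (m - 1) := by
    have hsub : vertexSpectrum c v ⊆ Set.Icc 1 (m - 1) := by
      rintro _ ⟨u, huv, rfl⟩
      exact hrange u v huv
    refine Set.eq_of_subset_of_ncard_le hsub ?_ (Set.finite_Icc _ _)
    rw [hc.ncard_vertexSpectrum, Set.ncard_Icc_nat]
    omega
  refine isIntervalColoring_of_vertexSpectrum hc (fun v => (hspec v).le) (fun k hk => ?_)
    (fun v => ⟨_, _, hspec v⟩)
  have : 0 < m := by have := hk.1.trans hk.2; omega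
  exact ⟨⟨0, this⟩, by rwa [hspec]⟩

end Coloring

section RoundRobin

variable {n : ℕ}

/-- The vertices `0, …, 2n-2` are the residues mod `2n-1` and `2n-1` plays the role of `∞`:
the edge `{a, b}` gets colour `a + b` and the edge `{a, ∞}` gets colour `2a`. -/
def roundRobinKey (n : ℕ) (a b : Fin (2 * n)) : ZMod (2 * n - 1) :=
  if (a : ℕ) = 2 * n - 1 then 2 * ((b : ℕ) : ZMod (2 * n - 1))
  else if (b : ℕ) = 2 * n - 1 then 2 * ((a : ℕ) : ZMod (2 * n - 1))
  else (a : ℕ) + (b : ℕ)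

theorem roundRobinKey_comm (a b : Fin (2 * n)) : roundRobinKey n a b = roundRobinKey n b a := by
  unfold roundRobinKey
  split_ifs with ha hb hb
  · rw [Fin.ext (ha.trans hb.symm)]
  all_goals ring

theorem roundRobinKey_inj {u v w : Fin (2 * n)} (hv : v ≠ u) (hw : w ≠ u)
    (h : roundRobinKey n u v = roundRobinKey n u w) : v = w := by
  have hu := u.isLt
  have cast_inj (a b : Fin (2 * n)) (ha : (a : ℕ) ≠ 2 * n - 1) (hb : (b : ℕ) ≠ 2 * n - 1)
      (hab : ((a : ℕ) : ZMod (2 * n - 1)) = (b : ℕ)) : a = b := by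
    have := a.isLt; have := b.isLt
    rw [ZMod.natCast_eq_natCast_iff', Nat.mod_eq_of_lt (by omega),
      Nat.mod_eq_of_lt (by omega)] at hab
    exact Fin.ext hab
  have cancel_two (x y : ZMod (2 * n - 1)) (hxy : 2 * x = 2 * y) : x = y := by
    have hzero : ((2 * n - 1 : ℕ) : ZMod (2 * n - 1)) = 0 := ZMod.natCast_self _
    push_cast [Nat.cast_sub (by omega : 1 ≤ 2 * n)] at hzero
    linear_combination (n : ZMod (2 * n - 1)) * hxy - (x - y) * hzero
  unfold roundRobinKey at h
  by_cases hu' : (u : ℕ) = 2 * n - 1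
  · rw [if_pos hu', if_pos hu'] at h
    exact cast_inj v w (fun h' => hv (Fin.ext (by omega))) (fun h' => hw (Fin.ext (by omega)))
      (cancel_two _ _ h)
  rw [if_neg hu', if_neg hu'] at h
  by_cases hv' : (v : ℕ) = 2 * n - 1 <;> by_cases hw' : (w : ℕ) = 2 * n - 1
  · exact Fin.ext (by omega)
  · rw [if_pos hv', if_neg hw'] at h
    exact absurd (cast_inj w u hw' hu' (by linear_combination -h)) hw
  · rw [if_neg hv', if_pos hw'] at h
    exact absurd (cast_inj v u hv' hu' (by linear_combination h)) hv
  · rw [if_neg hv', if_neg hw'] at h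
    exact cast_inj v w hv' hw' (by linear_combination h)

def roundRobin (n : ℕ) : Sym2 (Fin (2 * n)) → ℕ :=
  Sym2.lift ⟨fun a b => (roundRobinKey n a b).val + 1,
    fun a b => by dsimp only; rw [roundRobinKey_comm]⟩

theorem isIntervalColoring_roundRobin (n : ℕ) :
    IsIntervalColoring (2 * n) (2 * n - 1) (roundRobin n) := by
  refine IsProperColoring.isIntervalColoring (fun u v w huv huw hvw h => ?_) (fun u v _ => ?_)
  · have : roundRobinKey n u v = roundRobinKey n u w := by
      have := u.isLt
      have : NeZero (2 * n - 1) := ⟨by omega⟩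
      exact ZMod.val_injective _ (Nat.add_right_cancel h)
    exact hvw (roundRobinKey_inj (Ne.symm huv) (Ne.symm huw) this)
  · have := u.isLt
    have : NeZero (2 * n - 1) := ⟨by omega⟩
    have := ZMod.val_lt (roundRobinKey n u v)
    simp only [roundRobin, Sym2.lift_mk, Set.mem_Icc]
    omega

end RoundRobin

theorem Monotone.lt_card_filter_le_iff {N : ℕ} {β : Type*} [Preorder β] [DecidableLE β]
    {f : Fin N → β} (hf : Monotone f) (x : β) (p : Fin N) :
    (p : ℕ) < #{q | f q ≤ x} ↔ f p ≤ x := by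
  constructor
  · intro hp
    by_contra hfp
    have hsub : ({q | f q ≤ x} : Finset (Fin N)) ⊆ Iio p := fun q hq => by
      simp only [mem_filter, mem_univ, true_and] at hq
      exact mem_Iio.mpr (lt_of_not_ge fun hpq => hfp ((hf hpq).trans hq))
    have := card_le_card hsub
    rw [Fin.card_Iio] at this
    omega
  · intro hp
    have hsub : Iic p ⊆ ({q | f q ≤ x} : Finset (Fin N)) := fun q hq => by
      simp only [mem_filter, mem_univ, true_and]
      exact (hf (mem_Iic.mp hq)).trans hp
    have := card_le_card hsub
    rw [Fin.card_Iic] at this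
    omega

section PerfectMatching

variable {m : ℕ} {F : Set (Sym2 (Fin m))}

theorem IsPerfectMatchingSet.exists_mem (hF : IsPerfectMatchingSet m F) (v : Fin m) :
    ∃ u, u ≠ v ∧ s(u, v) ∈ F := by
  obtain ⟨e, ⟨he, hv⟩, -⟩ := hF.2 v
  obtain ⟨u, rfl⟩ := Sym2.mem_iff_exists.mp hv
  exact ⟨u, fun h => hF.1 _ he (by simp [h]), by rwa [Sym2.eq_swap]⟩

theorem IsPerfectMatchingSet.eq_of_mem (hF : IsPerfectMatchingSet m F) {u w v : Fin m}
    (hu : s(u, v) ∈ F) (hw : s(w, v) ∈ F) : u = w := by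
  obtain ⟨e, -, he⟩ := hF.2 v
  exact Sym2.congr_left.mp
    ((he _ ⟨hu, Sym2.mem_mk_right u v⟩).trans (he _ ⟨hw, Sym2.mem_mk_right w v⟩).symm)

theorem isPerfectMatchingSet_of_existsUnique (hdiag : ∀ e ∈ F, ¬ e.IsDiag)
    (h : ∀ v, ∃! u, s(u, v) ∈ F) : IsPerfectMatchingSet m F := by
  refine ⟨hdiag, fun v => ?_⟩
  obtain ⟨u, hu, huniq⟩ := h v
  refine ⟨s(u, v), ⟨hu, Sym2.mem_mk_right u v⟩, ?_⟩
  rintro e ⟨he, hv⟩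
  obtain ⟨w, rfl⟩ := Sym2.mem_iff_exists.mp hv
  rw [Sym2.eq_swap] at he ⊢
  rw [huniq w he]

/-- The partner map of a perfect matching is a fixed-point-free involution preserving `S`. -/
theorem IsPerfectMatchingSet.even_card_of_closed (hF : IsPerfectMatchingSet m F)
    (S : Finset (Fin m)) (hS : ∀ u v, s(u, v) ∈ F → u ∈ S → v ∈ S) : Even #S := by
  choose p hp using hF.exists_mem
  have hpp : Function.Involutive p := fun v =>
    hF.eq_of_mem (hp (p v)).2 (by rw [Sym2.eq_swap]; exact (hp v).2)
  have hpS (v : Fin m) : p v ∈ S ↔ v ∈ S :=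
    ⟨hS _ _ (hp v).2, hS _ _ (by rw [Sym2.eq_swap]; exact (hp v).2)⟩
  set τ := (hpp.toPerm p).subtypePerm (p := (· ∈ S)) hpS
  have hτ : τ ^ 2 = 1 := Equiv.ext fun v => Subtype.ext (hpp v)
  have hsupp : τ.support = univ :=
    eq_univ_of_forall fun v => Equiv.Perm.mem_support.mpr fun h => (hp v).1 (congrArg Subtype.val h)
  have := Equiv.Perm.two_dvd_card_support hτ
  rw [hsupp, card_univ, Fintype.card_coe] at this
  exact even_iff_two_dvd.mpr this

end PerfectMatching

section Splitting

variable {n : ℕ} {F : Set (Sym2 (Fin (2 * n)))}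

open Classical in
/-- A matching that is not splitted gets index `n`, so that all of its edges lie below the
split. -/
noncomputable def splitIndex (n : ℕ) (F : Set (Sym2 (Fin (2 * n)))) : ℕ :=
  if h : IsSplitted n F then h.choose else n

theorem splitIndex_spec (h : IsSplitted n F) :
    1 ≤ splitIndex n F ∧ splitIndex n F ≤ n - 1 ∧ ∀ u v : Fin (2 * n), s(u, v) ∈ F →
      (((u : ℕ) < 2 * splitIndex n F ∧ (v : ℕ) < 2 * splitIndex n F) ∨
        (2 * splitIndex n F ≤ (u : ℕ) ∧ 2 * splitIndex n F ≤ (v : ℕ))) := by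
  rw [splitIndex, dif_pos h]
  exact h.choose_spec

theorem splitIndex_of_not_isSplitted (h : ¬ IsSplitted n F) : splitIndex n F = n := by
  rw [splitIndex, dif_neg h]

theorem isSplitted_iff_splitIndex_lt : IsSplitted n F ↔ splitIndex n F < n := by
  by_cases h : IsSplitted n F
  · have := splitIndex_spec h
    exact iff_of_true h (by omega)
  · rw [splitIndex_of_not_isSplitted h]
    exact iff_of_false h (lt_irrefl n)

theorem one_le_splitIndex (hn : 1 ≤ n) (F : Set (Sym2 (Fin (2 * n)))) : 1 ≤ splitIndex n F := by
  by_cases h : IsSplitted n F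
  · exact (splitIndex_spec h).1
  · rwa [splitIndex_of_not_isSplitted h]

theorem splitIndex_lt_iff_of_mem {u v : Fin (2 * n)} (h : s(u, v) ∈ F) :
    (u : ℕ) < 2 * splitIndex n F ↔ (v : ℕ) < 2 * splitIndex n F := by
  by_cases hF : IsSplitted n F
  · rcases (splitIndex_spec hF).2.2 u v h with huv | huv <;> omega
  · rw [splitIndex_of_not_isSplitted hF]
    exact iff_of_true u.isLt v.isLt

end Splitting

section OneFactorization

variable {n : ℕ} {𝔉 : Fin (2 * n - 1) → Set (Sym2 (Fin (2 * n)))}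

theorem IsOneFactorization.comp_perm (h𝔉 : IsOneFactorization n 𝔉)
    (σ : Equiv.Perm (Fin (2 * n - 1))) : IsOneFactorization n (𝔉 ∘ σ) :=
  ⟨fun j => h𝔉.1 (σ j), fun e he => σ.existsUnique_congr_right.mpr (h𝔉.2 e he)⟩

theorem IsOneFactorization.vertexSpectrum_eq_range (h𝔉 : IsOneFactorization n 𝔉)
    {c : Sym2 (Fin (2 * n)) → ℕ} {g : Fin (2 * n - 1) → Fin (2 * n) → ℕ}
    (hc : ∀ j u v, s(u, v) ∈ 𝔉 j → c s(u, v) = g j v) (v : Fin (2 * n)) :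
    vertexSpectrum c v = Set.range (g · v) := by
  ext k
  constructor
  · rintro ⟨u, huv, rfl⟩
    obtain ⟨j, hj, -⟩ := h𝔉.2 s(u, v) (by simpa using huv)
    exact ⟨j, (hc j u v hj).symm⟩
  · rintro ⟨j, rfl⟩
    obtain ⟨u, huv, hj⟩ := (h𝔉.1 j).exists_mem v
    exact ⟨u, huv, hc j u v hj⟩

theorem IsOneFactorization.isProperColoring (h𝔉 : IsOneFactorization n 𝔉)
    {c : Sym2 (Fin (2 * n)) → ℕ} {g : Fin (2 * n - 1) → Fin (2 * n) → ℕ}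
    (hc : ∀ j u v, s(u, v) ∈ 𝔉 j → c s(u, v) = g j v) (hg : ∀ v, Function.Injective (g · v)) :
    IsProperColoring c := by
  intro u v w huv huw hvw hcol
  obtain ⟨j, hj, -⟩ := h𝔉.2 s(v, u) (by simpa using huv.symm)
  obtain ⟨j', hj', -⟩ := h𝔉.2 s(w, u) (by simpa using huw.symm)
  rw [Sym2.eq_swap, hc j v u hj, Sym2.eq_swap, hc j' w u hj'] at hcol
  obtain rfl := hg u hcol
  exact hvw ((h𝔉.1 j).eq_of_mem hj hj')

end OneFactorization

section SplitColoring

def shiftColor (d k : ℕ) (j : Fin d) : ℕ := if (j : ℕ) < k then j + (d + 1) else j + 1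

theorem shiftColor_injective (d k : ℕ) : Function.Injective (shiftColor d k) := by
  intro i j h
  have := i.isLt; have := j.isLt
  unfold shiftColor at h
  exact Fin.ext (by split_ifs at h <;> omega)

theorem range_shiftColor {d k : ℕ} (hk : k ≤ d) :
    Set.range (shiftColor d k) = Set.Icc (k + 1) (k + d) := by
  ext x
  simp only [Set.mem_range, Set.mem_Icc, shiftColor]
  constructor
  · rintro ⟨j, rfl⟩
    have := j.isLt
    split_ifs <;> omega
  · rintro ⟨hx1, hx2⟩
    by_cases hx : x ≤ d
    · exact ⟨⟨x - 1, by omega⟩, by simp only; split_ifs <;> omega⟩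
    · exact ⟨⟨x - (d + 1), by omega⟩, by simp only; split_ifs <;> omega⟩

variable {n : ℕ} {𝔉 : Fin (2 * n - 1) → Set (Sym2 (Fin (2 * n)))}

open Classical in
noncomputable def splitColoring (n : ℕ) (𝔉 : Fin (2 * n - 1) → Set (Sym2 (Fin (2 * n))))
    (e : Sym2 (Fin (2 * n))) : ℕ :=
  if h : ∃ j, e ∈ 𝔉 j then
    if ∀ p ∈ e, (p : ℕ) < 2 * splitIndex n (𝔉 h.choose) then (h.choose : ℕ) + 1
    else (h.choose : ℕ) + 2 * n
  else 0

theorem IsOneFactorization.splitColoring_of_mem (h𝔉 : IsOneFactorization n 𝔉)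
    {j : Fin (2 * n - 1)} {u v : Fin (2 * n)} (h : s(u, v) ∈ 𝔉 j) :
    splitColoring n 𝔉 s(u, v) =
      if (v : ℕ) < 2 * splitIndex n (𝔉 j) then (j : ℕ) + 1 else (j : ℕ) + 2 * n := by
  have hex : ∃ j, s(u, v) ∈ 𝔉 j := ⟨j, h⟩
  have hj : hex.choose = j := (h𝔉.2 _ ((h𝔉.1 j).1 _ h)).unique hex.choose_spec h
  simp only [splitColoring, dif_pos hex, hj, Sym2.mem_iff, forall_eq_or_imp, forall_eq,
    splitIndex_lt_iff_of_mem h, and_self]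

/-- When the factors are ordered by split index, the factors split at or below `v` are exactly
the first `#{i | splitIndex n (𝔉 i) ≤ v / 2}` ones. -/
theorem IsOneFactorization.splitColoring_eq_shiftColor (h𝔉 : IsOneFactorization n 𝔉)
    (hmono : Monotone fun j => splitIndex n (𝔉 j)) {j : Fin (2 * n - 1)} {u v : Fin (2 * n)}
    (h : s(u, v) ∈ 𝔉 j) :
    splitColoring n 𝔉 s(u, v) =
      shiftColor (2 * n - 1) #{i | splitIndex n (𝔉 i) ≤ (v : ℕ) / 2} j := by
  have := v.isLt
  have hiff : (j : ℕ) < #{i | splitIndex n (𝔉 i) ≤ (v : ℕ) / 2} ↔ splitIndex n (𝔉 j) ≤ v / 2 :=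
    hmono.lt_card_filter_le_iff _ j
  rw [h𝔉.splitColoring_of_mem h, shiftColor]
  split_ifs <;> omega

theorem IsOneFactorization.vertexSpectrum_splitColoring (h𝔉 : IsOneFactorization n 𝔉)
    (hmono : Monotone fun j => splitIndex n (𝔉 j)) (v : Fin (2 * n)) :
    vertexSpectrum (splitColoring n 𝔉) v =
      Set.Icc (#{i | splitIndex n (𝔉 i) ≤ (v : ℕ) / 2} + 1)
        (#{i | splitIndex n (𝔉 i) ≤ (v : ℕ) / 2} + (2 * n - 1)) := by
  rw [h𝔉.vertexSpectrum_eq_range fun j u v h => h𝔉.splitColoring_eq_shiftColor hmono h,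
    range_shiftColor ((card_le_univ _).trans (by simp))]

theorem IsOneFactorization.isIntervalColoring_splitColoring (h𝔉 : IsOneFactorization n 𝔉)
    (hmono : Monotone fun j => splitIndex n (𝔉 j)) :
    IsIntervalColoring (2 * n) (2 * n - 1 + {j | IsSplitted n (𝔉 j)}.ncard)
      (splitColoring n 𝔉) := by
  have hs : {j | IsSplitted n (𝔉 j)}.ncard = #{j | splitIndex n (𝔉 j) < n} := by
    simp only [isSplitted_iff_splitIndex_lt, ← Set.ncard_coe_finset, coe_filter, mem_univ,
      true_and]
  have hs_le : #{j | splitIndex n (𝔉 j) < n} ≤ 2 * n - 1 := (card_le_univ _).trans (by simp)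
  have hk (v : Fin (2 * n)) :
      #{i | splitIndex n (𝔉 i) ≤ (v : ℕ) / 2} ≤ #{j | splitIndex n (𝔉 j) < n} :=
    card_le_card (monotone_filter_right _ fun j hj => by have := v.isLt; omega)
  rw [hs]
  refine isIntervalColoring_of_vertexSpectrum
    (h𝔉.isProperColoring (fun j u v h => h𝔉.splitColoring_eq_shiftColor hmono h)
      fun v => shiftColor_injective _ _)
    (fun v => ?_) (fun x hx => ?_) (fun v => ⟨_, _, h𝔉.vertexSpectrum_splitColoring hmono v⟩)
  · rw [h𝔉.vertexSpectrum_splitColoring hmono]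
    exact Set.Icc_subset_Icc (by omega) (by have := hk v; omega)
  · obtain ⟨hx1, hx2⟩ := hx
    have hn : 1 ≤ n := by omega
    by_cases hx' : x ≤ 2 * n - 1
    · have h0 : #{i | splitIndex n (𝔉 i) ≤ 0 / 2} = 0 := card_eq_zero.mpr
        (filter_eq_empty_iff.mpr fun j _ => by have := one_le_splitIndex hn (𝔉 j); omega)
      refine ⟨⟨0, by omega⟩, ?_⟩
      rw [h𝔉.vertexSpectrum_splitColoring hmono, Fin.val_mk, h0]
      exact ⟨hx1, by omega⟩
    · have hlast : #{i | splitIndex n (𝔉 i) ≤ (2 * n - 1) / 2} = #{j | splitIndex n (𝔉 j) < n} :=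
        congrArg card (filter_congr fun j _ => by omega)
      refine ⟨⟨2 * n - 1, by omega⟩, ?_⟩
      rw [h𝔉.vertexSpectrum_splitColoring hmono, Fin.val_mk, hlast]
      exact ⟨by omega, by omega⟩

theorem IsOneFactorization.exists_isIntervalColoring (h𝔉 : IsOneFactorization n 𝔉) :
    ∃ c, IsIntervalColoring (2 * n) (2 * n - 1 + {j | IsSplitted n (𝔉 j)}.ncard) c := by
  set σ := Tuple.sort fun j => splitIndex n (𝔉 j)
  have hcard : {j | IsSplitted n ((𝔉 ∘ σ) j)}.ncard = {j | IsSplitted n (𝔉 j)}.ncard :=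
    Set.ncard_preimage_of_injective_subset_range (s := {j | IsSplitted n (𝔉 j)}) σ.injective
      (by simp)
  rw [← hcard]
  exact ⟨_, (h𝔉.comp_perm σ).isIntervalColoring_splitColoring
    (Tuple.monotone_sort fun j => splitIndex n (𝔉 j))⟩

end SplitColoring

section Relabelling

variable {m t : ℕ} {c : Sym2 (Fin m) → ℕ}

theorem vertexSpectrum_comp_map (c : Sym2 (Fin m) → ℕ) (ρ : Equiv.Perm (Fin m)) (v : Fin m) :
    vertexSpectrum (c ∘ Sym2.map ρ) v = vertexSpectrum c (ρ v) := by
  ext k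
  constructor
  · rintro ⟨u, huv, rfl⟩
    exact ⟨ρ u, ρ.injective.ne huv, rfl⟩
  · rintro ⟨u, huv, rfl⟩
    refine ⟨ρ.symm u, fun h => huv (by rw [← h, Equiv.apply_symm_apply]), ?_⟩
    simp

theorem IsIntervalColoring.comp_perm (hc : IsIntervalColoring m t c) (ρ : Equiv.Perm (Fin m)) :
    IsIntervalColoring m t (c ∘ Sym2.map ρ) := by
  refine ⟨fun u v w huv huw hvw => hc.1 (ρ u) (ρ v) (ρ w) (ρ.injective.ne huv)
      (ρ.injective.ne huw) (ρ.injective.ne hvw),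
    fun u v huv => hc.2.1 (ρ u) (ρ v) (ρ.injective.ne huv), fun k hk hkt => ?_,
    fun v => ?_⟩
  · obtain ⟨u, v, huv, hk⟩ := hc.2.2.1 k hk hkt
    exact ⟨ρ.symm u, ρ.symm v, ρ.symm.injective.ne huv, by simpa using hk⟩
  · obtain ⟨a, b, h⟩ := hc.2.2.2 (ρ v)
    exact ⟨a, b, (vertexSpectrum_comp_map c ρ v).trans h⟩

end Relabelling

theorem IsIntervalColoring.le_two_mul_sub_three {m t : ℕ} {c : Sym2 (Fin m) → ℕ}
    (hc : IsIntervalColoring m t c) : t ≤ 2 * m - 3 := by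
  obtain ⟨ℓ, hℓ⟩ := hc.exists_vertexSpectrum_eq_Ico
  rcases Nat.eq_zero_or_pos t with rfl | ht
  · exact Nat.zero_le _
  obtain ⟨x, y, hxy, h1⟩ := hc.2.2.1 1 le_rfl ht
  obtain ⟨u, v, huv, ht'⟩ := hc.2.2.1 t ht le_rfl
  have hy := (mem_Ico_of_vertexSpectrum_eq_Ico hℓ hxy).2
  have hv := (mem_Ico_of_vertexSpectrum_eq_Ico hℓ huv).2
  simp only [Set.mem_Ico] at hy hv
  rcases eq_or_ne y v with rfl | hyv
  · omega
  · have hyv := mem_Ico_of_vertexSpectrum_eq_Ico hℓ hyv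
    simp only [Set.mem_Ico] at hyv
    omega

section ResidueClasses

variable {n t : ℕ} {c : Sym2 (Fin (2 * n)) → ℕ} {ℓ : Fin (2 * n) → ℕ}

def residueClasses (n : ℕ) (c : Sym2 (Fin (2 * n)) → ℕ) (j : Fin (2 * n - 1)) :
    Set (Sym2 (Fin (2 * n))) :=
  {e | ¬ e.IsDiag ∧ c e % (2 * n - 1) = j}

theorem mk_mem_residueClasses {j : Fin (2 * n - 1)} {u v : Fin (2 * n)} :
    s(u, v) ∈ residueClasses n c j ↔ u ≠ v ∧ c s(u, v) % (2 * n - 1) = j := by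
  simp [residueClasses]

/-- Each spectrum consists of `2n - 1` consecutive colours, so it meets every residue class
mod `2n - 1` exactly once. -/
theorem isOneFactorization_residueClasses (hc : IsProperColoring c)
    (hℓ : ∀ v, vertexSpectrum c v = Set.Ico (ℓ v) (ℓ v + (2 * n - 1))) :
    IsOneFactorization n (residueClasses n c) := by
  refine ⟨fun j => isPerfectMatchingSet_of_existsUnique (fun e he => he.1) fun v => ?_,
    fun e he => ?_⟩
  · have hj : (j : ℕ) ∈ (Ico (ℓ v) (ℓ v + (2 * n - 1))).image (· % (2 * n - 1)) := by
      rw [Nat.image_Ico_mod]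
      exact mem_range.mpr j.isLt
    obtain ⟨k, hk, hkj⟩ := mem_image.mp hj
    obtain ⟨u, huv, rfl⟩ : k ∈ vertexSpectrum c v := by simpa [hℓ] using hk
    refine ⟨u, mk_mem_residueClasses.mpr ⟨huv, hkj⟩, fun w hw => ?_⟩
    obtain ⟨hwv, hwj⟩ := mk_mem_residueClasses.mp hw
    have hw' : c s(w, v) ∈ vertexSpectrum c v := ⟨w, hwv, rfl⟩
    rw [hℓ] at hw'
    refine hc.injOn v hwv huv (Nat.mod_injOn_Ico _ _ (by simpa using hw') (by simpa using hk) ?_)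
    exact hwj.trans hkj.symm
  · induction e using Sym2.ind with
    | _ u v =>
      have := u.isLt
      refine ⟨⟨c s(u, v) % (2 * n - 1), Nat.mod_lt _ (by omega)⟩,
        ⟨he, rfl⟩, fun j hj => Fin.ext hj.2.symm⟩

end ResidueClasses

theorem IsPerfectMatchingSet.isSplitted {n N : ℕ} {F : Set (Sym2 (Fin (2 * n)))}
    (hF : IsPerfectMatchingSet (2 * n) F) (h2 : 2 ≤ N) (hN : N + 2 ≤ 2 * n)
    (hclosed : ∀ u v : Fin (2 * n), s(u, v) ∈ F → ((u : ℕ) < N ↔ (v : ℕ) < N)) :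
    IsSplitted n F := by
  have heven : Even N := by
    have := hF.even_card_of_closed {v | (v : ℕ) < N} fun u v h hu => by
      simp only [mem_filter, mem_univ, true_and] at hu ⊢
      exact (hclosed u v h).mp hu
    rwa [Fin.card_filter_val_lt, min_eq_right (by omega)] at this
  obtain ⟨i, rfl⟩ := heven
  exact ⟨i, by omega, by omega, fun u v h => by have := hclosed u v h; omega⟩

section SplittedClasses

variable {n t : ℕ} {c : Sym2 (Fin (2 * n)) → ℕ} {ℓ : Fin (2 * n) → ℕ}

/-- With the vertices ordered by `ℓ`, the residue class of `j` is split after the vertices with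
`ℓ v ≤ j`: as `t ≤ 4n - 3`, its edges have colour `j`, with both ends below the split, or
`j + 2n - 1`, with both ends above it. -/
theorem IsIntervalColoring.isSplitted_residueClasses (hc : IsIntervalColoring (2 * n) t c)
    (hℓ : ∀ v, vertexSpectrum c v = Set.Ico (ℓ v) (ℓ v + (2 * n - 1))) (hmono : Monotone ℓ)
    {j : Fin (2 * n - 1)} (hj : 1 ≤ (j : ℕ)) (hjt : (j : ℕ) + (2 * n - 1) ≤ t) :
    IsSplitted n (residueClasses n c j) := by
  have ht := hc.le_two_mul_sub_three
  have hpos (v : Fin (2 * n)) : (v : ℕ) < #{w | ℓ w ≤ j} ↔ ℓ v ≤ j :=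
    hmono.lt_card_filter_le_iff _ v
  have hends {u v : Fin (2 * n)} (huv : u ≠ v) :
      (ℓ u ≤ c s(u, v) ∧ c s(u, v) < ℓ u + (2 * n - 1)) ∧
        (ℓ v ≤ c s(u, v) ∧ c s(u, v) < ℓ v + (2 * n - 1)) :=
    mem_Ico_of_vertexSpectrum_eq_Ico hℓ huv
  refine ((isOneFactorization_residueClasses hc.1 hℓ).1 j).isSplitted (N := #{w | ℓ w ≤ j})
    ?_ ?_ fun u v h => ?_
  · obtain ⟨u, v, huv, hcol⟩ := hc.2.2.1 j hj (by omega)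
    have := (hpos u).mpr (by have := hends huv; omega)
    have := (hpos v).mpr (by have := hends huv; omega)
    have := Fin.val_ne_of_ne huv
    omega
  · obtain ⟨u, v, huv, hcol⟩ := hc.2.2.1 (j + (2 * n - 1)) (by omega) hjt
    have := (hpos u).not.mpr (by have := hends huv; omega)
    have := (hpos v).not.mpr (by have := hends huv; omega)
    have := Fin.val_ne_of_ne huv
    have := u.isLt; have := v.isLt
    omega
  · obtain ⟨huv, hmod⟩ := mk_mem_residueClasses.mp h
    have hct := mem_Icc.mp (hc.2.1 u v huv)
    have hcol : c s(u, v) = j ∨ c s(u, v) = j + (2 * n - 1) := by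
      rcases lt_or_ge (c s(u, v)) (2 * n - 1) with hlt | hge
      · rw [Nat.mod_eq_of_lt hlt] at hmod
        exact Or.inl hmod
      · rw [Nat.mod_eq_sub_mod hge, Nat.mod_eq_of_lt (by omega)] at hmod
        omega
    rw [hpos, hpos]
    have := hends huv
    omega

theorem IsIntervalColoring.sub_le_ncard_isSplitted (hc : IsIntervalColoring (2 * n) t c)
    (hℓ : ∀ v, vertexSpectrum c v = Set.Ico (ℓ v) (ℓ v + (2 * n - 1))) (hmono : Monotone ℓ) :
    t - (2 * n - 1) ≤ {j | IsSplitted n (residueClasses n c j)}.ncard := by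
  have ht := hc.le_two_mul_sub_three
  rcases Nat.eq_zero_or_pos (t - (2 * n - 1)) with h0 | hpos
  · exact h0.le.trans (Nat.zero_le _)
  have hd : 0 < 2 * n - 1 := by omega
  calc t - (2 * n - 1) = (Set.Icc 1 (t - (2 * n - 1))).ncard := by simp
    _ ≤ {j | IsSplitted n (residueClasses n c j)}.ncard := by
      refine Set.ncard_le_ncard_of_injOn (fun k => ⟨k % (2 * n - 1), Nat.mod_lt _ hd⟩)
        (fun k hk => ?_) (fun a ha b hb hab => ?_)
      · have hk' : k % (2 * n - 1) = k := Nat.mod_eq_of_lt (by have := hk.2; omega)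
        exact hc.isSplitted_residueClasses hℓ hmono (by simp only [hk']; exact hk.1)
          (by simp only [hk']; have := hk.2; omega)
      · have := congrArg Fin.val hab
        simp only at this
        rwa [Nat.mod_eq_of_lt (by have := ha.2; omega),
          Nat.mod_eq_of_lt (by have := hb.2; omega)] at this

theorem IsIntervalColoring.exists_isOneFactorization (hc : IsIntervalColoring (2 * n) t c) :
    ∃ 𝔉, IsOneFactorization n 𝔉 ∧ t ≤ 2 * n - 1 + {j | IsSplitted n (𝔉 j)}.ncard := by
  obtain ⟨ℓ, hℓ⟩ := hc.exists_vertexSpectrum_eq_Ico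
  set ρ := Tuple.sort ℓ
  have hℓρ (v : Fin (2 * n)) :
      vertexSpectrum (c ∘ Sym2.map ρ) v = Set.Ico (ℓ (ρ v)) (ℓ (ρ v) + (2 * n - 1)) := by
    rw [vertexSpectrum_comp_map, hℓ]
  have := (hc.comp_perm ρ).sub_le_ncard_isSplitted hℓρ (Tuple.monotone_sort ℓ)
  exact ⟨_, isOneFactorization_residueClasses (hc.comp_perm ρ).1 hℓρ, by omega⟩

end SplittedClasses

theorem exists_isOneFactorization (n : ℕ) : ∃ 𝔉, IsOneFactorization n 𝔉 :=
  (isIntervalColoring_roundRobin n).exists_isOneFactorization.imp fun _ h => h.1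

theorem statement_0_general (n : ℕ) :
    W (2 * n) = 2 * n - 1 + sigmaSplit n := by
  set S := {s | ∃ 𝔉 : Fin (2 * n - 1) → Set (Sym2 (Fin (2 * n))),
    IsOneFactorization n 𝔉 ∧ {j : Fin (2 * n - 1) | IsSplitted n (𝔉 j)}.ncard = s}
  have hbdd : BddAbove S := by
    refine ⟨2 * n - 1, ?_⟩
    rintro _ ⟨𝔉, -, rfl⟩
    simpa using Set.ncard_le_card {j | IsSplitted n (𝔉 j)}
  obtain ⟨𝔉, h𝔉⟩ := exists_isOneFactorization n
  obtain ⟨𝔉σ, h𝔉σ, hσ⟩ : sSup S ∈ S := Nat.sSup_mem ⟨_, 𝔉, h𝔉, rfl⟩ hbdd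
  refine IsGreatest.csSup_eq ⟨?_, ?_⟩
  · rw [sigmaSplit, ← hσ]
    exact h𝔉σ.exists_isIntervalColoring
  · rintro t ⟨c, hc⟩
    obtain ⟨𝔉', h𝔉', ht⟩ := hc.exists_isOneFactorization
    exact ht.trans (Nat.add_le_add_left (le_csSup hbdd ⟨𝔉', h𝔉', rfl⟩) _)

/-- Equivalence theorem: `W(K_{2n}) = 2n - 1 + σ_n`. -/
theorem statement_0 (n : ℕ) (hn : 1 ≤ n) :
    W (2 * n) = 2 * n - 1 + sigmaSplit n :=
  statement_0_general n
end

section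
/- For every integer n ≥ 3, W(K_{2n}) ≤ 4n - 5; equivalently, K_{2n} has no interval t-coloring with t ≥ 4n - 4. -/
/-- Every vertex of an interval-colored `K_{2n}` has spectrum
`[a, a + (2n-2)]` for some `a` with `1 ≤ a` and `a + (2n-2) ≤ t`. -/
lemma spec_exists (n t : ℕ) (hn : 3 ≤ n) (c : Sym2 (Fin (2 * n)) → ℕ)
    (hprop : ∀ x u w : Fin (2 * n), u ≠ x → w ≠ x → u ≠ w → c s(u, x) ≠ c s(w, x))
    (h2 : ∀ u v : Fin (2 * n), u ≠ v → c s(u, v) ∈ Finset.Icc 1 t)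
    (h4 : ∀ v : Fin (2 * n), ∃ a b : ℕ,
      {k : ℕ | ∃ u : Fin (2 * n), u ≠ v ∧ c s(u, v) = k} = Set.Icc a b) :
    ∀ v : Fin (2 * n), ∃ a : ℕ, 1 ≤ a ∧ a + (2 * n - 2) ≤ t ∧
      (∀ u : Fin (2 * n), u ≠ v → a ≤ c s(u, v) ∧ c s(u, v) ≤ a + (2 * n - 2)) ∧
      (∀ k : ℕ, a ≤ k → k ≤ a + (2 * n - 2) →
        ∃ u : Fin (2 * n), u ≠ v ∧ c s(u, v) = k) := by
  intro v
  obtain ⟨a, b, hab⟩ := h4 v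
  have himg : Finset.image (fun u => c s(u, v)) ({v}ᶜ : Finset (Fin (2 * n)))
      = Finset.Icc a b := by
    apply Finset.coe_injective
    rw [Finset.coe_image, Finset.coe_Icc, ← hab]
    ext k
    simp only [Finset.coe_compl, Finset.coe_singleton, Set.mem_image,
      Set.mem_compl_iff, Set.mem_singleton_iff, Set.mem_setOf_eq]
  have hcard1 : ({v}ᶜ : Finset (Fin (2 * n))).card = 2 * n - 1 := by
    simp [Finset.card_compl]
  have hinj : Set.InjOn (fun u => c s(u, v)) ↑({v}ᶜ : Finset (Fin (2 * n))) := by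
    intro x hx y hy hxy
    by_contra hne
    simp only [Finset.coe_compl, Set.mem_compl_iff, Finset.coe_singleton,
      Set.mem_singleton_iff] at hx hy
    exact hprop v x y hx hy hne hxy
  have hcard2 : (Finset.Icc a b).card = 2 * n - 1 := by
    rw [← himg, Finset.card_image_of_injOn hinj, hcard1]
  rw [Nat.card_Icc] at hcard2
  have hle : a ≤ b := by omega
  have hmem : ∀ k, a ≤ k → k ≤ b → ∃ u, u ≠ v ∧ c s(u, v) = k := by
    intro k hk1 hk2
    have hk : k ∈ Set.Icc a b := ⟨hk1, hk2⟩
    rw [← hab] at hk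
    exact hk
  obtain ⟨ua, hua, hca⟩ := hmem a le_rfl hle
  obtain ⟨ub, hub, hcb⟩ := hmem b hle le_rfl
  have h2a := h2 ua v hua
  have h2b := h2 ub v hub
  rw [Finset.mem_Icc] at h2a h2b
  refine ⟨a, by omega, by omega, ?_, ?_⟩
  · intro u hu
    have hk : c s(u, v) ∈ Set.Icc a b := by rw [← hab]; exact ⟨u, hu, rfl⟩
    rw [Set.mem_Icc] at hk
    omega
  · intro k hk1 hk2; exact hmem k hk1 (by omega)

lemma aux_one_le (n t : ℕ) (hn : 3 ≤ n) (ht : 4 * n - 4 ≤ t) : 1 ≤ t := by omega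

lemma aux_ne (n t x : ℕ) (hn : 3 ≤ n) (ht : 4 * n - 4 ≤ t) (h1 : x ≤ 1)
    (h2 : t ≤ x + (2 * n - 2)) : False := by omega

lemma aux_t4 (n t a1 x1 x2 : ℕ) (hn : 3 ≤ n) (ht : 4 * n - 4 ≤ t) (ha1 : a1 ≤ 1)
    (l1 : t ≤ x1 + (2 * n - 2)) (u1 : x1 ≤ a1 + (2 * n - 2))
    (l2 : t ≤ x2 + (2 * n - 2)) (u2 : x2 ≤ a1 + (2 * n - 2))
    (hx : x1 ≠ x2) : t = 4 * n - 4 := by omega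

lemma aux_r (n t aw : ℕ) (hn : 3 ≤ n) (ht4 : t = 4 * n - 4)
    (h : aw + (2 * n - 2) ≤ t) (h' : t ≤ aw + (2 * n - 2)) :
    aw ≤ 4 * n - 5 ∧ 4 * n - 5 ≤ aw + (2 * n - 2) := by omega

lemma aux_45 (n t : ℕ) (hn : 3 ≤ n) (ht4 : t = 4 * n - 4) (h : t = 4 * n - 5) :
    False := by omega

lemma aux_zu (n a1 x : ℕ) (hn : 3 ≤ n) (ha : a1 ≤ 1)
    (hx : x ≤ a1 + (2 * n - 2)) (he : x = 4 * n - 5) : False := by omega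

lemma interval_arith_aux (n t a1 az x1 x2 f : ℕ) (hn : 3 ≤ n) (ht : 4 * n - 4 ≤ t)
    (ha1 : a1 ≤ 1)
    (hx1l : t ≤ x1 + (2 * n - 2)) (hx1u : x1 ≤ a1 + (2 * n - 2))
    (hx2l : t ≤ x2 + (2 * n - 2)) (hx2u : x2 ≤ a1 + (2 * n - 2))
    (hx : x1 ≠ x2)
    (haz : 4 * n - 5 ≤ az + (2 * n - 2)) (hazt : az + (2 * n - 2) ≤ t)
    (hfl : az ≤ f) (hfu : f ≤ a1 + (2 * n - 2))
    (hf1 : f ≠ x1) (hf2 : f ≠ x2) : f = 2 * n - 3 := by omega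

theorem no_big_interval_coloring (n : ℕ) (hn : 3 ≤ n) (t : ℕ) (ht : 4 * n - 4 ≤ t)
    (c : Sym2 (Fin (2 * n)) → ℕ) : ¬ IsIntervalColoring (2 * n) t c := by
  rintro ⟨h1, h2, h3, h4⟩
  have hsym : ∀ u v : Fin (2 * n), c s(u, v) = c s(v, u) := by
    intro u v; rw [Sym2.eq_swap]
  have hprop : ∀ x u w : Fin (2 * n), u ≠ x → w ≠ x → u ≠ w →
      c s(u, x) ≠ c s(w, x) := by
    intro x u w hux hwx huw
    rw [hsym u x, hsym w x]
    exact h1 x u w (Ne.symm hux) (Ne.symm hwx) huw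
  have spec := spec_exists n t hn c hprop h2 h4
  choose a ha1 ha2 ha3 ha4 using spec
  -- the color-1 edge and the color-t edge
  obtain ⟨u1, u2, hu12, hcu⟩ := h3 1 le_rfl (aux_one_le n t hn ht)
  obtain ⟨w1, w2, hw12, hcw⟩ := h3 t (aux_one_le n t hn ht) le_rfl
  have hcu' : c s(u2, u1) = 1 := by rw [hsym u2 u1]; exact hcu
  have hcw' : c s(w2, w1) = t := by rw [hsym w2 w1]; exact hcw
  have hAu1 : a u1 ≤ 1 := le_of_le_of_eq (ha3 u1 u2 hu12.symm).1 hcu'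
  have hAu2 : a u2 ≤ 1 := le_of_le_of_eq (ha3 u2 u1 hu12).1 hcu
  have hWu1 : t ≤ a w1 + (2 * n - 2) :=
    le_of_eq_of_le hcw'.symm (ha3 w1 w2 hw12.symm).2
  have hWu2 : t ≤ a w2 + (2 * n - 2) :=
    le_of_eq_of_le hcw.symm (ha3 w2 w1 hw12).2
  have hW1 := ha2 w1
  have hu1w1 : u1 ≠ w1 := by
    intro h; rw [h] at hAu1; exact aux_ne n t (a w1) hn ht hAu1 hWu1
  have hu1w2 : u1 ≠ w2 := by
    intro h; rw [h] at hAu1; exact aux_ne n t (a w2) hn ht hAu1 hWu2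
  have hu2w1 : u2 ≠ w1 := by
    intro h; rw [h] at hAu2; exact aux_ne n t (a w1) hn ht hAu2 hWu1
  have hu2w2 : u2 ≠ w2 := by
    intro h; rw [h] at hAu2; exact aux_ne n t (a w2) hn ht hAu2 hWu2
  -- cross edges between {u1,u2} and {w1,w2}
  have E11 := ha3 w1 u1 hu1w1
  have E12 := ha3 w2 u1 hu1w2
  have E21 := ha3 w1 u2 hu2w1
  have E22 := ha3 w2 u2 hu2w2
  have s11 : c s(w1, u1) = c s(u1, w1) := hsym w1 u1
  have s12 : c s(w2, u1) = c s(u1, w2) := hsym w2 u1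
  have s21 : c s(w1, u2) = c s(u2, w1) := hsym w1 u2
  have s22 : c s(w2, u2) = c s(u2, w2) := hsym w2 u2
  -- bounds for the four cross colors, seen from the u-side orientation
  have b11l : t ≤ c s(w1, u1) + (2 * n - 2) := by
    rw [s11]; exact le_trans hWu1 (Nat.add_le_add_right E11.1 _)
  have b11u : c s(w1, u1) ≤ a u1 + (2 * n - 2) := (ha3 u1 w1 hu1w1.symm).2
  have b12l : t ≤ c s(w2, u1) + (2 * n - 2) := by
    rw [s12]; exact le_trans hWu2 (Nat.add_le_add_right E12.1 _)
  have b12u : c s(w2, u1) ≤ a u1 + (2 * n - 2) := (ha3 u1 w2 hu1w2.symm).2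
  have b21l : t ≤ c s(w1, u2) + (2 * n - 2) := by
    rw [s21]; exact le_trans hWu1 (Nat.add_le_add_right E21.1 _)
  have b21u : c s(w1, u2) ≤ a u2 + (2 * n - 2) := (ha3 u2 w1 hu2w1.symm).2
  have b22l : t ≤ c s(w2, u2) + (2 * n - 2) := by
    rw [s22]; exact le_trans hWu2 (Nat.add_le_add_right E22.1 _)
  have b22u : c s(w2, u2) ≤ a u2 + (2 * n - 2) := (ha3 u2 w2 hu2w2.symm).2
  have d1 : c s(w1, u1) ≠ c s(w2, u1) := hprop u1 w1 w2 hu1w1.symm hu1w2.symm hw12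
  have d2 : c s(w1, u2) ≠ c s(w2, u2) := hprop u2 w1 w2 hu2w1.symm hu2w2.symm hw12
  -- hence t = 4n - 4
  have ht4 : t = 4 * n - 4 :=
    aux_t4 n t (a u1) _ _ hn ht hAu1 b11l b11u b12l b12u d1
  -- there is a vertex z with c s(z, w1) = 4n - 5
  obtain ⟨hr1, hr2⟩ := aux_r n t (a w1) hn ht4 hW1 hWu1
  obtain ⟨z, hzw1, hcz⟩ := ha4 w1 (4 * n - 5) hr1 hr2
  have hzw2 : z ≠ w2 := by
    intro h; rw [h] at hcz
    exact aux_45 n t hn ht4 (hcw'.symm.trans hcz)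
  have hzu1 : z ≠ u1 := by
    intro h; rw [h] at hcz; rw [s11] at b11u
    exact aux_zu n (a u1) _ hn hAu1 b11u hcz
  have hzu2 : z ≠ u2 := by
    intro h; rw [h] at hcz; rw [s21] at b21u
    exact aux_zu n (a u2) _ hn hAu2 b21u hcz
  have Gz := ha3 z w1 hzw1.symm
  have sz : c s(w1, z) = c s(z, w1) := hsym w1 z
  have haz : 4 * n - 5 ≤ a z + (2 * n - 2) := by rw [← hcz, ← sz]; exact Gz.2
  have hazt := ha2 z
  have G1 := ha3 u1 z hzu1
  have G2 := ha3 u2 z hzu2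
  have H1 := ha3 z u1 hzu1.symm
  have H2 := ha3 z u2 hzu2.symm
  have t1 : c s(u1, z) = c s(z, u1) := hsym u1 z
  have t2 : c s(u2, z) = c s(z, u2) := hsym u2 z
  have hfl1 : a z ≤ c s(z, u1) := by rw [← t1]; exact H1.1
  have hfl2 : a z ≤ c s(z, u2) := by rw [← t2]; exact H2.1
  have hfu1 : c s(z, u1) ≤ a u1 + (2 * n - 2) := G1.2
  have hfu2 : c s(z, u2) ≤ a u2 + (2 * n - 2) := G2.2
  have e1 : c s(z, u1) ≠ c s(w1, u1) := hprop u1 z w1 hzu1 hu1w1.symm hzw1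
  have e2 : c s(z, u1) ≠ c s(w2, u1) := hprop u1 z w2 hzu1 hu1w2.symm hzw2
  have e3 : c s(z, u2) ≠ c s(w1, u2) := hprop u2 z w1 hzu2 hu2w1.symm hzw1
  have e4 : c s(z, u2) ≠ c s(w2, u2) := hprop u2 z w2 hzu2 hu2w2.symm hzw2
  have efin : c s(u1, z) ≠ c s(u2, z) := hprop z u1 u2 hzu1.symm hzu2.symm hu12
  have hf1 : c s(z, u1) = 2 * n - 3 :=
    interval_arith_aux n t (a u1) (a z) _ _ _ hn ht hAu1
      b11l b11u b12l b12u d1 haz hazt hfl1 hfu1 e1 e2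
  have hf2 : c s(z, u2) = 2 * n - 3 :=
    interval_arith_aux n t (a u2) (a z) _ _ _ hn ht hAu2
      b21l b21u b22l b22u d2 haz hazt hfl2 hfu2 e3 e4
  exact efin (by rw [t1, t2, hf1, hf2])

/-- `W(K_{2n}) ≤ 4n - 5` for `n ≥ 3`; equivalently there is no interval
`t`-coloring of `K_{2n}` with `t ≥ 4n - 4`. -/
theorem statement_7 (n : ℕ) (hn : 3 ≤ n) :
    W (2 * n) ≤ 4 * n - 5 ∧
    ∀ t : ℕ, 4 * n - 4 ≤ t →
      ∀ c : Sym2 (Fin (2 * n)) → ℕ, ¬ IsIntervalColoring (2 * n) t c := by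
  constructor
  · apply csSup_le'
    rintro t ⟨c, hc⟩
    by_contra h
    push_neg at h
    exact no_big_interval_coloring n hn t (by omega) c hc
  · exact fun t ht c => no_big_interval_coloring n hn t ht c
end

section
/- For every integer n ≥ 5, W(K_{2n}) ≤ 4n - 6; equivalently, K_{2n} has no interval t-coloring with t ≥ 4n - 5. -/
set_option maxHeartbeats 1000000
set_option linter.all false
set_option linter.unusedVariables false

lemma even_card_of_invol {α : Type*} [DecidableEq α] :
    ∀ (s : Finset α) (f : α → α),
      (∀ x ∈ s, f x ∈ s ∧ f x ≠ x ∧ f (f x) = x) → Even s.card := by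
  intro s
  induction s using Finset.strongInduction with
  | _ s ih =>
    intro f hf
    rcases s.eq_empty_or_nonempty with rfl | ⟨x, hx⟩
    · simp
    · obtain ⟨hfx, hfxne, hffx⟩ := hf x hx
      have hfx' : f x ∈ s.erase x := Finset.mem_erase.mpr ⟨hfxne, hfx⟩
      set s' := (s.erase x).erase (f x) with hs'
      have hsubset : s' ⊆ s := fun y hy =>
        Finset.mem_of_mem_erase (Finset.mem_of_mem_erase hy)
      have hxnot : x ∉ s' := by
        intro hxs'
        exact (Finset.mem_erase.mp (Finset.mem_of_mem_erase hxs')).1 rfl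
      have hsub : s' ⊂ s := (Finset.ssubset_iff_of_subset hsubset).mpr ⟨x, hx, hxnot⟩
      have hprop : ∀ y ∈ s', f y ∈ s' ∧ f y ≠ y ∧ f (f y) = y := by
        intro y hy
        have hy1 : y ∈ s := hsubset hy
        have hyx : y ≠ x := (Finset.mem_erase.mp (Finset.mem_of_mem_erase hy)).1
        have hyfx : y ≠ f x := (Finset.mem_erase.mp hy).1
        obtain ⟨h1, h2, h3⟩ := hf y hy1
        refine ⟨Finset.mem_erase.mpr ⟨fun he => hyx ?_, Finset.mem_erase.mpr ⟨fun he => hyfx ?_, h1⟩⟩, h2, h3⟩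
        · rw [← h3, he, hffx]
        · rw [← h3, he]
      have heven := ih s' hsub f hprop
      have hcard : s.card = s'.card + 2 := by
        have h1 : (s.erase x).card = s.card - 1 := Finset.card_erase_of_mem hx
        have h2 : s'.card = (s.erase x).card - 1 := Finset.card_erase_of_mem hfx'
        have h3 : 0 < s.card := Finset.card_pos.mpr ⟨x, hx⟩
        have h4 : 0 < (s.erase x).card := Finset.card_pos.mpr ⟨f x, hfx'⟩
        omega
      obtain ⟨m, hm⟩ := heven
      exact ⟨m + 1, by omega⟩

lemma no_coloring (n t : ℕ) (hn : 5 ≤ n) (ht : 4 * n - 5 ≤ t)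
    (c : Sym2 (Fin (2 * n)) → ℕ) (H : IsIntervalColoring (2 * n) t c) : False := by
  classical
  obtain ⟨hprop, hrange, hused, hspec⟩ := H
  choose a b hab using hspec
  have hsym : ∀ u v : Fin (2*n), c s(u,v) = c s(v,u) := fun u v => by rw [Sym2.eq_swap]
  have hdist : ∀ v u w : Fin (2*n), u ≠ v → w ≠ v → u ≠ w → c s(u,v) ≠ c s(w,v) := by
    intro v u w h1 h2 h3
    rw [hsym u v, hsym w v]
    exact hprop v u w (Ne.symm h1) (Ne.symm h2) h3
  have huniq : ∀ (v u u' : Fin (2*n)), u ≠ v → u' ≠ v → c s(u,v) = c s(u',v) → u = u' := by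
    intro v u u' h1 h2 h3
    by_contra hne
    exact hdist v u u' h1 h2 hne h3
  have hmem : ∀ (v : Fin (2*n)) (k : ℕ),
      (∃ u, u ≠ v ∧ c s(u,v) = k) ↔ (a v ≤ k ∧ k ≤ b v) := by
    intro v k
    have := Set.ext_iff.mp (hab v) k
    simpa [Set.mem_Icc] using this
  have hedge : ∀ u v : Fin (2*n), u ≠ v → a v ≤ c s(u,v) ∧ c s(u,v) ≤ b v := by
    intro u v h; exact (hmem v _).mp ⟨u, h, rfl⟩
  have hb : ∀ v, b v = a v + (2 * n - 2) := by
    intro v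
    have hcb : (Finset.univ.erase v).card = (Finset.Icc (a v) (b v)).card := by
      apply Finset.card_bij (fun u _ => c s(u, v))
      · intro u hu
        exact Finset.mem_Icc.mpr (hedge u v (Finset.mem_erase.mp hu).1)
      · intro u1 h1 u2 h2 heq
        exact huniq v u1 u2 (Finset.mem_erase.mp h1).1 (Finset.mem_erase.mp h2).1 heq
      · intro k hk
        obtain ⟨u, hu, hcu⟩ := (hmem v k).mpr (Finset.mem_Icc.mp hk)
        exact ⟨u, Finset.mem_erase.mpr ⟨hu, Finset.mem_univ u⟩, hcu⟩
    rw [Finset.card_erase_of_mem (Finset.mem_univ v), Nat.card_Icc] at hcb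
    simp only [Finset.card_univ, Fintype.card_fin] at hcb
    omega
  have hat : ∀ v, 1 ≤ a v ∧ b v ≤ t := by
    intro v
    have hle : a v ≤ b v := by have := hb v; omega
    obtain ⟨u, hu, hcu⟩ := (hmem v (a v)).mpr ⟨le_refl _, hle⟩
    obtain ⟨u', hu', hcu'⟩ := (hmem v (b v)).mpr ⟨hle, le_refl _⟩
    have h1 := Finset.mem_Icc.mp (hrange u v hu)
    have h2 := Finset.mem_Icc.mp (hrange u' v hu')
    omega
  set cover : ℕ → Finset (Fin (2*n)) :=
    fun k => Finset.univ.filter (fun v => a v ≤ k ∧ k ≤ b v) with hcoverdef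
  have hcovmem : ∀ k v, v ∈ cover k ↔ (a v ≤ k ∧ k ≤ b v) := by
    intro k v; simp [hcoverdef]
  have key : ∀ k : ℕ, ∃ F : Fin (2*n) → Fin (2*n),
      ∀ v, v ∈ cover k → F v ∈ cover k ∧ F v ≠ v ∧ c s(F v, v) = k ∧
        (∀ u, u ≠ v → c s(u, v) = k → u = F v) := by
    intro k
    refine ⟨fun v => if h : ∃ u, u ≠ v ∧ c s(u,v) = k then h.choose else v, ?_⟩
    intro v hv
    have hex : ∃ u, u ≠ v ∧ c s(u,v) = k := (hmem v k).mpr ((hcovmem k v).mp hv)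
    simp only [dif_pos hex]
    obtain ⟨h1, h2⟩ := hex.choose_spec
    have hmemF : hex.choose ∈ cover k := by
      have h := hedge v hex.choose (Ne.symm h1)
      rw [hsym v hex.choose, h2] at h
      exact (hcovmem k _).mpr h
    exact ⟨hmemF, h1, h2, fun u hu hcu => huniq v u hex.choose hu h1 (hcu.trans h2.symm)⟩
  choose F hF using key
  have heven : ∀ k, Even (cover k).card := by
    intro k
    apply even_card_of_invol _ (F k)
    intro x hxk
    obtain ⟨h1, h2, h3, _⟩ := hF k x hxk
    refine ⟨h1, h2, ?_⟩
    obtain ⟨_, _, _, huniq'⟩ := hF k (F k x) h1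
    exact (huniq' x (Ne.symm h2) (by rw [hsym x (F k x)]; exact h3)).symm
  have hcovne : ∀ k, 1 ≤ k → k ≤ t → (cover k).Nonempty := by
    intro k h1 h2
    obtain ⟨u, v, huv, hc⟩ := hused k h1 h2
    exact ⟨v, (hcovmem k v).mpr ((hmem v k).mp ⟨u, huv, hc⟩)⟩
  -- a vertex with minimal spectrum
  obtain ⟨u1, hu1a⟩ : ∃ u, a u = 1 := by
    obtain ⟨v, hv⟩ := hcovne 1 le_rfl (by omega)
    have h1 := (hcovmem 1 v).mp hv
    have h2 := (hat v).1
    exact ⟨v, by omega⟩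
  -- a vertex with maximal spectrum
  obtain ⟨w1, hw1a⟩ : ∃ w, a w = t - (2*n - 2) := by
    obtain ⟨v, hv⟩ := hcovne t (by omega) le_rfl
    have h1 := (hcovmem t v).mp hv
    have h2 := (hat v).2
    have h3 := hb v
    exact ⟨v, by omega⟩
  -- CASE t ≥ 4n-2 : extreme spectra are disjoint
  by_cases hbig : 4*n-2 ≤ t
  · have hne : u1 ≠ w1 := by
      intro h; rw [h] at hu1a; omega
    have h1 := hedge w1 u1 (Ne.symm hne)
    have h2 := hedge u1 w1 hne
    rw [hsym u1 w1] at h2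
    have hbu1 := hb u1
    omega
  push_neg at hbig
  -- CASE t = 4n-3
  by_cases h3 : t = 4*n-3
  · subst h3
    have hBne := hcovne (4*n-3) (by omega) le_rfl
    have hcard2 : 1 < (cover (4*n-3)).card := by
      obtain ⟨m, hm⟩ := heven (4*n-3)
      have := Finset.card_pos.mpr hBne
      omega
    obtain ⟨z1, hz1, z2, hz2, hzne⟩ := Finset.one_lt_card.mp hcard2
    have hz1m := (hcovmem _ z1).mp hz1
    have hz2m := (hcovmem _ z2).mp hz2
    have hbz1 := hb z1; have hbz2 := hb z2
    have haz1 : 2*n-1 ≤ a z1 := by omega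
    have haz2 : 2*n-1 ≤ a z2 := by omega
    have hz1u : z1 ≠ u1 := fun h => by rw [h, hu1a] at haz1; omega
    have hz2u : z2 ≠ u1 := fun h => by rw [h, hu1a] at haz2; omega
    have e1 := hedge z1 u1 hz1u
    have e2 := hedge z2 u1 hz2u
    have f1 := hedge u1 z1 (Ne.symm hz1u)
    rw [hsym u1 z1] at f1
    have f2 := hedge u1 z2 (Ne.symm hz2u)
    rw [hsym u1 z2] at f2
    have hd := hdist u1 z1 z2 hz1u hz2u hzne
    have hbu1 := hb u1
    omega
  -- CASE t = 4n-4
  by_cases h4 : t = 4*n-4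
  · subst h4
    have hBne := hcovne (4*n-4) (by omega) le_rfl
    have hcard2 : 1 < (cover (4*n-4)).card := by
      obtain ⟨m, hm⟩ := heven (4*n-4)
      have := Finset.card_pos.mpr hBne
      omega
    obtain ⟨w1', hw1', w2', hw2', hwne⟩ := Finset.one_lt_card.mp hcard2
    have hmemB : ∀ z, z ∈ cover (4*n-4) → a z = 2*n-2 := by
      intro z hz
      have h := (hcovmem _ z).mp hz
      have := hb z; have := (hat z).2
      omega
    have hwu1 : ∀ z, z ∈ cover (4*n-4) → z ≠ u1 := by
      intro z hz h
      have := hmemB z hz; rw [h, hu1a] at this; omega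
    have hcol : ∀ z, z ∈ cover (4*n-4) → c s(z, u1) = 2*n-2 ∨ c s(z,u1) = 2*n-1 := by
      intro z hz
      have hzu := hwu1 z hz
      have e := hedge z u1 hzu
      have f := hedge u1 z (Ne.symm hzu)
      rw [hsym u1 z] at f
      have := hb u1; have := hmemB z hz; have := hb z
      omega
    have hcardB : (cover (4*n-4)).card ≤ 2 := by
      have hinj := Finset.card_le_card_of_injOn (s := cover (4*n-4))
        (t := Finset.Icc (2*n-2) (2*n-1)) (fun z => c s(z, u1)) ?_ ?_
      · rw [Nat.card_Icc] at hinj; omega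
      · intro z hz
        have := hcol z (Finset.mem_coe.mp hz)
        show c s(z, u1) ∈ Finset.Icc (2*n-2) (2*n-1)
        exact Finset.mem_Icc.mpr (by omega)
      · intro z hz z' hz' he
        exact huniq u1 z z' (hwu1 z (Finset.mem_coe.mp hz)) (hwu1 z' (Finset.mem_coe.mp hz')) he
    have hBeq : ∀ z ∈ cover (4*n-4), z = w1' ∨ z = w2' := by
      intro z hz
      by_contra hcon
      push_neg at hcon
      have h3' : 2 < (cover (4*n-4)).card :=
        Finset.two_lt_card.mpr ⟨w1', hw1', w2', hw2', z, hz, hwne, Ne.symm hcon.1, Ne.symm hcon.2⟩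
      omega
    have hsub : cover (4*n-4) ⊆ cover (4*n-5) := by
      intro z hz
      have h := (hcovmem _ z).mp hz
      have h2 := hb z
      have h3 := (hat z).2
      exact (hcovmem _ z).mpr ⟨by omega, by omega⟩
    by_cases hC : ((cover (4*n-5)) \ (cover (4*n-4))) = ∅
    · have hceq : ∀ z ∈ cover (4*n-5), z ∈ cover (4*n-4) := by
        intro z hz
        by_contra hzn
        exact (Finset.eq_empty_iff_forall_notMem.mp hC z) (Finset.mem_sdiff.mpr ⟨hz, hzn⟩)
      have hw1c5 : w1' ∈ cover (4*n-5) := hsub hw1'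
      obtain ⟨hm5, hne5, hc5, _⟩ := hF (4*n-5) w1' hw1c5
      obtain ⟨hm4, hne4, hc4, _⟩ := hF (4*n-4) w1' hw1'
      have he5 : F (4*n-5) w1' = w2' := by
        rcases hBeq _ (hceq _ hm5) with h | h
        · exact absurd h hne5
        · exact h
      have he4 : F (4*n-4) w1' = w2' := by
        rcases hBeq _ hm4 with h | h
        · exact absurd h hne4
        · exact h
      rw [he5] at hc5; rw [he4] at hc4
      omega
    · have hCne : ((cover (4*n-5)) \ (cover (4*n-4))).Nonempty := Finset.nonempty_iff_ne_empty.mpr hC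
      have hCcard : 1 < ((cover (4*n-5)) \ (cover (4*n-4))).card := by
        have hsd : ((cover (4*n-5)) \ (cover (4*n-4))).card
            = (cover (4*n-5)).card - (cover (4*n-4)).card := Finset.card_sdiff_of_subset hsub
        obtain ⟨m1, hm1⟩ := heven (4*n-5)
        obtain ⟨m2, hm2⟩ := heven (4*n-4)
        have hle := Finset.card_le_card hsub
        have := Finset.card_pos.mpr hCne
        omega
      obtain ⟨x1, hx1, x2, hx2, hxne⟩ := Finset.one_lt_card.mp hCcard
      have hmemC : ∀ z, z ∈ (cover (4*n-5)) \ (cover (4*n-4)) → a z = 2*n-3 := by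
        intro z hz
        obtain ⟨hz5, hz4⟩ := Finset.mem_sdiff.mp hz
        have h5' := (hcovmem _ z).mp hz5
        have h4' : ¬ (a z ≤ 4*n-4 ∧ 4*n-4 ≤ b z) := fun hcc => hz4 ((hcovmem _ z).mpr hcc)
        have := hb z; have := (hat z).2
        omega
    -- four distinct colors into a 3-element set
      have hax1 := hmemC _ hx1; have hax2 := hmemC _ hx2
      have haw1 := hmemB _ hw1'; have haw2 := hmemB _ hw2'
      have hx1u : x1 ≠ u1 := fun h => by rw [h, hu1a] at hax1; omega
      have hx2u : x2 ≠ u1 := fun h => by rw [h, hu1a] at hax2; omega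
      have hw1u := hwu1 _ hw1'; have hw2u := hwu1 _ hw2'
      have hx1w1 : x1 ≠ w1' := fun h => by rw [h, haw1] at hax1; omega
      have hx1w2 : x1 ≠ w2' := fun h => by rw [h, haw2] at hax1; omega
      have hx2w1 : x2 ≠ w1' := fun h => by rw [h, haw1] at hax2; omega
      have hx2w2 : x2 ≠ w2' := fun h => by rw [h, haw2] at hax2; omega
      have ew1 := hcol _ hw1'
      have ew2 := hcol _ hw2'
      have ex1l := hedge u1 x1 (Ne.symm hx1u)
      rw [hsym u1 x1] at ex1l
      have ex1u := hedge x1 u1 hx1u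
      have ex2l := hedge u1 x2 (Ne.symm hx2u)
      rw [hsym u1 x2] at ex2l
      have ex2u := hedge x2 u1 hx2u
      have d1 := hdist u1 w1' w2' hw1u hw2u hwne
      have d2 := hdist u1 w1' x1 hw1u hx1u (Ne.symm hx1w1)
      have d3 := hdist u1 w1' x2 hw1u hx2u (Ne.symm hx2w1)
      have d4 := hdist u1 w2' x1 hw2u hx1u (Ne.symm hx1w2)
      have d5 := hdist u1 w2' x2 hw2u hx2u (Ne.symm hx2w2)
      have d6 := hdist u1 x1 x2 hx1u hx2u hxne
      have hbx1 := hb x1; have hbx2 := hb x2; have hbu1 := hb u1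
      clear hprop hrange hused hab hsym hdist hmem hedge hat hb hcovmem hF heven hcovne
      clear hcol hmemB hwu1 hBeq hcardB hsub hC hCne hCcard hmemC hcard2 hBne
      clear hx1 hx2 hw1' hw2' hwne hxne hx1w1 hx1w2 hx2w1 hx2w2 hx1u hx2u hw1u hw2u
      clear F cover hcoverdef ht hbig h3 hw1a
      omega
  -- CASE t = 4n-5
  have h5 : t = 4*n-5 := by omega
  subst h5
  clear hbig h3 h4 ht
  have hw1a' : a w1 = 2*n-3 := by omega
  clear hw1a
  have havd : ∀ v, a v ≤ 2*n-3 := by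
    intro v; have := (hat v).2; have := hb v; omega
  -- lower bound on prefix counts via u1
  have hNle : ∀ q, 1 ≤ q → q ≤ 2*n-1 →
      q + 1 ≤ (Finset.univ.filter (fun v => a v ≤ q)).card := by
    intro q hq1 hq2
    have hmu1 : ∀ k, 1 ≤ k → k ≤ q → u1 ∈ cover k := by
      intro k h1 h2
      have := hb u1
      exact (hcovmem k u1).mpr ⟨by omega, by omega⟩
    have hinj : Set.InjOn (fun k => F k u1) ↑(Finset.Icc 1 q) := by
      intro k1 h1 k2 h2 he
      simp only [Finset.coe_Icc, Set.mem_Icc] at h1 h2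
      have e1 := (hF k1 u1 (hmu1 k1 h1.1 h1.2)).2.2.1
      have e2 := (hF k2 u1 (hmu1 k2 h2.1 h2.2)).2.2.1
      simp only at he
      rw [← e1, ← e2, he]
    have hmaps : ∀ k ∈ Finset.Icc 1 q,
        F k u1 ∈ (Finset.univ.filter (fun v => a v ≤ q)).erase u1 := by
      intro k hk
      obtain ⟨h1, h2⟩ := Finset.mem_Icc.mp hk
      obtain ⟨hm, hne, hck, _⟩ := hF k u1 (hmu1 k h1 h2)
      refine Finset.mem_erase.mpr ⟨hne, Finset.mem_filter.mpr ⟨Finset.mem_univ _, ?_⟩⟩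
      have h := hedge u1 (F k u1) (Ne.symm hne)
      rw [hsym u1 (F k u1), hck] at h
      omega
    have hle := Finset.card_le_card_of_injOn (fun k => F k u1) hmaps hinj
    rw [Nat.card_Icc] at hle
    have hmemu1 : u1 ∈ Finset.univ.filter (fun v => a v ≤ q) :=
      Finset.mem_filter.mpr ⟨Finset.mem_univ _, by omega⟩
    have h1 := Finset.card_erase_of_mem hmemu1
    have h2 := Finset.card_pos.mpr ⟨u1, hmemu1⟩
    omega
  -- lower bound on suffix counts via w1
  have hSge : ∀ p, 1 ≤ p → p ≤ 2*n-3 →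
      2*n-1-p ≤ (Finset.univ.filter (fun v => p ≤ a v)).card := by
    intro p hp1 hp2
    have hmw1 : ∀ k, p + (2*n-2) ≤ k → k ≤ 4*n-5 → w1 ∈ cover k := by
      intro k h1 h2
      have := hb w1
      exact (hcovmem k w1).mpr ⟨by omega, by omega⟩
    have hinj : Set.InjOn (fun k => F k w1) ↑(Finset.Icc (p + (2*n-2)) (4*n-5)) := by
      intro k1 h1 k2 h2 he
      simp only [Finset.coe_Icc, Set.mem_Icc] at h1 h2
      have e1 := (hF k1 w1 (hmw1 k1 h1.1 h1.2)).2.2.1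
      have e2 := (hF k2 w1 (hmw1 k2 h2.1 h2.2)).2.2.1
      simp only at he
      rw [← e1, ← e2, he]
    have hmaps : ∀ k ∈ Finset.Icc (p + (2*n-2)) (4*n-5),
        F k w1 ∈ (Finset.univ.filter (fun v => p ≤ a v)).erase w1 := by
      intro k hk
      obtain ⟨h1, h2⟩ := Finset.mem_Icc.mp hk
      obtain ⟨hm, hne, hck, _⟩ := hF k w1 (hmw1 k h1 h2)
      refine Finset.mem_erase.mpr ⟨hne, Finset.mem_filter.mpr ⟨Finset.mem_univ _, ?_⟩⟩
      have h := hedge w1 (F k w1) (Ne.symm hne)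
      rw [hsym w1 (F k w1), hck] at h
      have := hb (F k w1)
      omega
    have hle := Finset.card_le_card_of_injOn (fun k => F k w1) hmaps hinj
    rw [Nat.card_Icc] at hle
    have hmemw1 : w1 ∈ Finset.univ.filter (fun v => p ≤ a v) :=
      Finset.mem_filter.mpr ⟨Finset.mem_univ _, by omega⟩
    have h1 := Finset.card_erase_of_mem hmemw1
    have h2 := Finset.card_pos.mpr ⟨w1, hmemw1⟩
    omega
  -- identifications of covers with prefix/suffix filters
  have hcovq : ∀ q, 1 ≤ q → q ≤ 2*n-1 →
      cover q = Finset.univ.filter (fun v => a v ≤ q) := by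
    intro q h1 h2; ext v
    rw [hcovmem, Finset.mem_filter]
    have := hb v; have := (hat v).1
    simp only [Finset.mem_univ, true_and]
    omega
  have hcovp : ∀ k p, 2*n-3 ≤ k → k ≤ 4*n-5 → p + (2*n-2) = k →
      cover k = Finset.univ.filter (fun v => p ≤ a v) := by
    intro k p h1 h2 h3; ext v
    rw [hcovmem, Finset.mem_filter]
    have := hb v; have := (hat v).2
    simp only [Finset.mem_univ, true_and]
    omega
  have hNeven : ∀ q, 1 ≤ q → q ≤ 2*n-1 →
      Even (Finset.univ.filter (fun v => a v ≤ q)).card := by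
    intro q h1 h2
    rw [← hcovq q h1 h2]
    exact heven q
  have hSeven : ∀ p, 1 ≤ p → p ≤ 2*n-3 →
      Even (Finset.univ.filter (fun v => p ≤ a v)).card := by
    intro p h1 h2
    rw [← hcovp (p + (2*n-2)) p (by omega) (by omega) rfl]
    exact heven _
  have hNSgen : ∀ q p, p = q + 1 →
      (Finset.univ.filter (fun v => a v ≤ q)).card
      + (Finset.univ.filter (fun v => p ≤ a v)).card = 2*n := by
    intro q p hp
    have h := Finset.card_filter_add_card_filter_not
      (s := (Finset.univ : Finset (Fin (2*n)))) (p := fun v => a v ≤ q)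
    rw [Finset.card_univ, Fintype.card_fin] at h
    have he : Finset.univ.filter (fun v => ¬ a v ≤ q)
        = Finset.univ.filter (fun v => p ≤ a v) :=
      Finset.filter_congr (fun v _ => by omega)
    rw [he] at h
    exact h
  -- |{a = 2n-3}| = 2
  have hS3card : (Finset.univ.filter (fun v => 2*n-3 ≤ a v)).card = 2 := by
    have hl := hSge (2*n-3) (by omega) (by omega)
    have hup : (Finset.univ.filter (fun v => 2*n-3 ≤ a v)).card ≤ 3 := by
      have hinj := Finset.card_le_card_of_injOn
        (s := Finset.univ.filter (fun v => 2*n-3 ≤ a v))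
        (t := Finset.Icc (2*n-3) (2*n-1)) (fun z => c s(z, u1)) ?_ ?_
      · rw [Nat.card_Icc] at hinj; omega
      · intro z hz
        have hz' := (Finset.mem_filter.mp hz).2
        have hzu : z ≠ u1 := fun h => by rw [h, hu1a] at hz'; omega
        have e := hedge z u1 hzu
        have f := hedge u1 z (Ne.symm hzu)
        rw [hsym u1 z] at f
        have := hb u1
        show c s(z, u1) ∈ Finset.Icc (2*n-3) (2*n-1)
        exact Finset.mem_Icc.mpr (by omega)
      · intro z hz z' hz' he
        have h1 := (Finset.mem_filter.mp (Finset.mem_coe.mp hz)).2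
        have h2 := (Finset.mem_filter.mp (Finset.mem_coe.mp hz')).2
        have hzu : z ≠ u1 := fun h => by rw [h, hu1a] at h1; omega
        have hzu' : z' ≠ u1 := fun h => by rw [h, hu1a] at h2; omega
        exact huniq u1 z z' hzu hzu' he
    obtain ⟨m, hm⟩ := hSeven (2*n-3) (by omega) (by omega)
    omega
  have hS4card : (Finset.univ.filter (fun v => 2*n-4 ≤ a v)).card = 4 := by
    have hl := hSge (2*n-4) (by omega) (by omega)
    obtain ⟨m, hm⟩ := hSeven (2*n-4) (by omega) (by omega)
    have hN := hNle (2*n-5) (by omega) (by omega)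
    have hNS := hNSgen (2*n-5) (2*n-4) (by omega)
    omega
  have hS5card : (Finset.univ.filter (fun v => 2*n-5 ≤ a v)).card = 4 := by
    have hl := hSge (2*n-5) (by omega) (by omega)
    have hN := hNle (2*n-6) (by omega) (by omega)
    obtain ⟨m, hm⟩ := hNeven (2*n-6) (by omega) (by omega)
    have hNS := hNSgen (2*n-6) (2*n-5) (by omega)
    omega
  have hS6card : (Finset.univ.filter (fun v => 2*n-6 ≤ a v)).card = 6 := by
    have hl := hSge (2*n-6) (by omega) (by omega)
    obtain ⟨m, hm⟩ := hSeven (2*n-6) (by omega) (by omega)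
    have hN := hNle (2*n-7) (by omega) (by omega)
    have hNS := hNSgen (2*n-7) (2*n-6) (by omega)
    omega
  have hS7card : (Finset.univ.filter (fun v => 2*n-7 ≤ a v)).card = 6 := by
    have hl := hSge (2*n-7) (by omega) (by omega)
    have hN := hNle (2*n-8) (by omega) (by omega)
    obtain ⟨m, hm⟩ := hNeven (2*n-8) (by omega) (by omega)
    have hNS := hNSgen (2*n-8) (2*n-7) (by omega)
    omega
  -- subset chains
  have hsub34 : (Finset.univ.filter (fun v => 2*n-3 ≤ a v))
      ⊆ (Finset.univ.filter (fun v => 2*n-4 ≤ a v)) := by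
    intro z hz
    have := (Finset.mem_filter.mp hz).2
    exact Finset.mem_filter.mpr ⟨Finset.mem_univ _, by omega⟩
  have hsub45 : (Finset.univ.filter (fun v => 2*n-4 ≤ a v))
      ⊆ (Finset.univ.filter (fun v => 2*n-5 ≤ a v)) := by
    intro z hz
    have := (Finset.mem_filter.mp hz).2
    exact Finset.mem_filter.mpr ⟨Finset.mem_univ _, by omega⟩
  have hsub46 : (Finset.univ.filter (fun v => 2*n-4 ≤ a v))
      ⊆ (Finset.univ.filter (fun v => 2*n-6 ≤ a v)) := by
    intro z hz
    have := (Finset.mem_filter.mp hz).2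
    exact Finset.mem_filter.mpr ⟨Finset.mem_univ _, by omega⟩
  have hsub67 : (Finset.univ.filter (fun v => 2*n-6 ≤ a v))
      ⊆ (Finset.univ.filter (fun v => 2*n-7 ≤ a v)) := by
    intro z hz
    have := (Finset.mem_filter.mp hz).2
    exact Finset.mem_filter.mpr ⟨Finset.mem_univ _, by omega⟩
  -- empty classes 2n-5 and 2n-7
  have heq45 : (Finset.univ.filter (fun v => 2*n-5 ≤ a v))
      = (Finset.univ.filter (fun v => 2*n-4 ≤ a v)) :=
    (Finset.eq_of_subset_of_card_le hsub45 (by omega)).symm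
  have heq67 : (Finset.univ.filter (fun v => 2*n-7 ≤ a v))
      = (Finset.univ.filter (fun v => 2*n-6 ≤ a v)) :=
    (Finset.eq_of_subset_of_card_le hsub67 (by omega)).symm
  -- extract the three top pairs
  obtain ⟨wa, wb, hwab, hBeq2⟩ := Finset.card_eq_two.mp hS3card
  have hCcard : ((Finset.univ.filter (fun v => 2*n-4 ≤ a v))
      \ (Finset.univ.filter (fun v => 2*n-3 ≤ a v))).card = 2 := by
    rw [Finset.card_sdiff_of_subset hsub34, hS4card, hS3card]
  obtain ⟨xa, xb, hxab, hCeq⟩ := Finset.card_eq_two.mp hCcard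
  have hVcard : ((Finset.univ.filter (fun v => 2*n-6 ≤ a v))
      \ (Finset.univ.filter (fun v => 2*n-4 ≤ a v))).card = 2 := by
    rw [Finset.card_sdiff_of_subset hsub46, hS6card, hS4card]
  obtain ⟨va, vb, hvab, hVeq⟩ := Finset.card_eq_two.mp hVcard
  -- a-values of the six vertices
  have hwamem : wa ∈ (Finset.univ.filter (fun v => 2*n-3 ≤ a v)) := by
    rw [hBeq2]; exact Finset.mem_insert_self _ _
  have hwbmem : wb ∈ (Finset.univ.filter (fun v => 2*n-3 ≤ a v)) := by
    rw [hBeq2]; exact Finset.mem_insert_of_mem (Finset.mem_singleton_self _)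
  have hawa : a wa = 2*n-3 := by
    have := (Finset.mem_filter.mp hwamem).2; have := havd wa; omega
  have hawb : a wb = 2*n-3 := by
    have := (Finset.mem_filter.mp hwbmem).2; have := havd wb; omega
  have hxamem : xa ∈ (Finset.univ.filter (fun v => 2*n-4 ≤ a v))
      \ (Finset.univ.filter (fun v => 2*n-3 ≤ a v)) := by
    rw [hCeq]; exact Finset.mem_insert_self _ _
  have hxbmem : xb ∈ (Finset.univ.filter (fun v => 2*n-4 ≤ a v))
      \ (Finset.univ.filter (fun v => 2*n-3 ≤ a v)) := by
    rw [hCeq]; exact Finset.mem_insert_of_mem (Finset.mem_singleton_self _)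
  have haxa : a xa = 2*n-4 := by
    obtain ⟨h1, h2⟩ := Finset.mem_sdiff.mp hxamem
    have := (Finset.mem_filter.mp h1).2
    have : ¬ (2*n-3 ≤ a xa) := fun hc => h2 (Finset.mem_filter.mpr ⟨Finset.mem_univ _, hc⟩)
    omega
  have haxb : a xb = 2*n-4 := by
    obtain ⟨h1, h2⟩ := Finset.mem_sdiff.mp hxbmem
    have := (Finset.mem_filter.mp h1).2
    have : ¬ (2*n-3 ≤ a xb) := fun hc => h2 (Finset.mem_filter.mpr ⟨Finset.mem_univ _, hc⟩)
    omega
  have hvamem : va ∈ (Finset.univ.filter (fun v => 2*n-6 ≤ a v))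
      \ (Finset.univ.filter (fun v => 2*n-4 ≤ a v)) := by
    rw [hVeq]; exact Finset.mem_insert_self _ _
  have hvbmem : vb ∈ (Finset.univ.filter (fun v => 2*n-6 ≤ a v))
      \ (Finset.univ.filter (fun v => 2*n-4 ≤ a v)) := by
    rw [hVeq]; exact Finset.mem_insert_of_mem (Finset.mem_singleton_self _)
  have h45 : ∀ v : Fin (2*n), 2*n-5 ≤ a v → 2*n-4 ≤ a v := by
    intro v hv
    have hm' : v ∈ (Finset.univ.filter (fun v => 2*n-5 ≤ a v)) :=
      Finset.mem_filter.mpr ⟨Finset.mem_univ _, hv⟩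
    rw [heq45] at hm'
    exact (Finset.mem_filter.mp hm').2
  have hava : a va = 2*n-6 := by
    obtain ⟨h1, h2⟩ := Finset.mem_sdiff.mp hvamem
    have := (Finset.mem_filter.mp h1).2
    have h4' : ¬ (2*n-4 ≤ a va) := fun hc => h2 (Finset.mem_filter.mpr ⟨Finset.mem_univ _, hc⟩)
    have h5' : ¬ (2*n-5 ≤ a va) := fun hc => h4' (h45 va hc)
    omega
  have havb : a vb = 2*n-6 := by
    obtain ⟨h1, h2⟩ := Finset.mem_sdiff.mp hvbmem
    have := (Finset.mem_filter.mp h1).2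
    have h4' : ¬ (2*n-4 ≤ a vb) := fun hc => h2 (Finset.mem_filter.mpr ⟨Finset.mem_univ _, hc⟩)
    have h5' : ¬ (2*n-5 ≤ a vb) := fun hc => h4' (h45 vb hc)
    omega
  clear hprop hrange hused hab hmem hedge hdist heven hcovne hNle hSge hcovq
  clear hNeven hSeven hNSgen hS3card hS4card hS5card hS6card hS7card
  clear hsub34 hsub45 hsub46 hsub67 hCcard hVcard h45
  clear hwamem hwbmem hxamem hxbmem hvamem hvbmem havd hat hu1a hw1a'
  have hmemcov : ∀ (z : Fin (2*n)) (k : ℕ), a z ≤ k → k ≤ a z + (2*n-2) → z ∈ cover k := by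
    intro z k h1 h2
    have := hb z
    exact (hcovmem _ _).mpr ⟨h1, by omega⟩
  have hcov5 : cover (4*n-5) = {wa, wb} := by
    rw [hcovp (4*n-5) (2*n-3) (by omega) (by omega) (by omega), hBeq2]
  have hcov6 : cover (4*n-6) = Finset.univ.filter (fun v => 2*n-4 ≤ a v) :=
    hcovp (4*n-6) (2*n-4) (by omega) (by omega) (by omega)
  have hcov7 : cover (4*n-7) = Finset.univ.filter (fun v => 2*n-4 ≤ a v) := by
    rw [hcovp (4*n-7) (2*n-5) (by omega) (by omega) (by omega), heq45]
  have hcov8 : cover (4*n-8) = Finset.univ.filter (fun v => 2*n-6 ≤ a v) :=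
    hcovp (4*n-8) (2*n-6) (by omega) (by omega) (by omega)
  have hcov9 : cover (4*n-9) = Finset.univ.filter (fun v => 2*n-6 ≤ a v) := by
    rw [hcovp (4*n-9) (2*n-7) (by omega) (by omega) (by omega), heq67]
  have hC4mem : ∀ z, z ∈ Finset.univ.filter (fun v => 2*n-4 ≤ a v) →
      z = wa ∨ z = wb ∨ z = xa ∨ z = xb := by
    intro z hz
    by_cases h3' : z ∈ Finset.univ.filter (fun v => 2*n-3 ≤ a v)
    · rw [hBeq2] at h3'
      rcases Finset.mem_insert.mp h3' with h | h
      · exact Or.inl h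
      · exact Or.inr (Or.inl (Finset.mem_singleton.mp h))
    · have hzz : z ∈ (Finset.univ.filter (fun v => 2*n-4 ≤ a v))
          \ (Finset.univ.filter (fun v => 2*n-3 ≤ a v)) := Finset.mem_sdiff.mpr ⟨hz, h3'⟩
      rw [hCeq] at hzz
      rcases Finset.mem_insert.mp hzz with h | h
      · exact Or.inr (Or.inr (Or.inl h))
      · exact Or.inr (Or.inr (Or.inr (Finset.mem_singleton.mp h)))
  have hC6mem : ∀ z, z ∈ Finset.univ.filter (fun v => 2*n-6 ≤ a v) →
      z = wa ∨ z = wb ∨ z = xa ∨ z = xb ∨ z = va ∨ z = vb := by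
    intro z hz
    by_cases h4' : z ∈ Finset.univ.filter (fun v => 2*n-4 ≤ a v)
    · rcases hC4mem z h4' with h | h | h | h
      · exact Or.inl h
      · exact Or.inr (Or.inl h)
      · exact Or.inr (Or.inr (Or.inl h))
      · exact Or.inr (Or.inr (Or.inr (Or.inl h)))
    · have hzz : z ∈ (Finset.univ.filter (fun v => 2*n-6 ≤ a v))
          \ (Finset.univ.filter (fun v => 2*n-4 ≤ a v)) := Finset.mem_sdiff.mpr ⟨hz, h4'⟩
      rw [hVeq] at hzz
      rcases Finset.mem_insert.mp hzz with h | h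
      · exact Or.inr (Or.inr (Or.inr (Or.inr (Or.inl h))))
      · exact Or.inr (Or.inr (Or.inr (Or.inr (Or.inr (Finset.mem_singleton.mp h)))))
  -- the edge wa-wb has color 4n-5
  have hww : c s(wb, wa) = 4*n-5 := by
    obtain ⟨hm5, hne5, hc5, _⟩ := hF (4*n-5) wa (hmemcov wa (4*n-5) (by omega) (by omega))
    have heqq : F (4*n-5) wa = wb := by
      have hmm := hm5
      rw [hcov5] at hmm
      rcases Finset.mem_insert.mp hmm with h | h
      · exact absurd h hne5
      · exact Finset.mem_singleton.mp h
    rw [← heqq]; exact hc5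
  have hww' : c s(wa, wb) = 4*n-5 := by rw [hsym wa wb]; exact hww
  -- the w-x edges have colors 4n-6 / 4n-7
  have hWX : ∀ w w' : Fin (2*n), ((w = wa ∧ w' = wb) ∨ (w = wb ∧ w' = wa)) →
      ∀ x : Fin (2*n), (x = xa ∨ x = xb) →
      c s(x, w) = 4*n-6 ∨ c s(x, w) = 4*n-7 := by
    intro w w' hcase x hx
    have haw : a w = 2*n-3 := by rcases hcase with ⟨rfl, _⟩ | ⟨rfl, _⟩ <;> omega
    have hcw' : c s(w', w) = 4*n-5 := by
      rcases hcase with ⟨rfl, rfl⟩ | ⟨rfl, rfl⟩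
      · exact hww
      · exact hww'
    obtain ⟨hm6', hne6, hc6, _⟩ := hF (4*n-6) w (hmemcov w (4*n-6) (by omega) (by omega))
    obtain ⟨hm7', hne7, hc7, _⟩ := hF (4*n-7) w (hmemcov w (4*n-7) (by omega) (by omega))
    have hP : ∀ k, (k = 4*n-6 ∨ k = 4*n-7) → F k w ∈ cover k → F k w ≠ w →
        c s(F k w, w) = k → F k w = xa ∨ F k w = xb := by
      intro k hk hmem hne hc
      have hmm : F k w ∈ Finset.univ.filter (fun v => 2*n-4 ≤ a v) := by
        rcases hk with rfl | rfl
        · rw [← hcov6]; exact hmem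
        · rw [← hcov7]; exact hmem
      have hnwa : F k w ≠ wa := by
        intro h
        rcases hcase with ⟨rfl, rfl⟩ | ⟨rfl, rfl⟩
        · exact hne h
        · rw [h] at hc; omega
      have hnwb : F k w ≠ wb := by
        intro h
        rcases hcase with ⟨rfl, rfl⟩ | ⟨rfl, rfl⟩
        · rw [h] at hc; omega
        · exact hne h
      rcases hC4mem _ hmm with h | h | h | h
      · exact absurd h hnwa
      · exact absurd h hnwb
      · exact Or.inl h
      · exact Or.inr h
    have hP6 := hP (4*n-6) (Or.inl rfl) hm6' hne6 hc6
    have hP7 := hP (4*n-7) (Or.inr rfl) hm7' hne7 hc7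
    have hP67 : F (4*n-6) w ≠ F (4*n-7) w := by
      intro he
      rw [he] at hc6
      omega
    rcases hx with rfl | rfl
    · rcases hP6 with h6 | h6
      · left; rw [← h6]; exact hc6
      · rcases hP7 with h7 | h7
        · right; rw [← h7]; exact hc7
        · exact absurd (h6.trans h7.symm) hP67
    · rcases hP6 with h6 | h6
      · rcases hP7 with h7 | h7
        · exact absurd (h6.trans h7.symm) hP67
        · right; rw [← h7]; exact hc7
      · left; rw [← h6]; exact hc6
  -- for colors 4n-8, 4n-9 the partners of wa, wb are among {va, vb}
  have hWv : ∀ k, (k = 4*n-8 ∨ k = 4*n-9) → ∀ w w' : Fin (2*n),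
      ((w = wa ∧ w' = wb) ∨ (w = wb ∧ w' = wa)) →
      F k w = va ∨ F k w = vb := by
    intro k hk w w' hcase
    have hkb : 4*n-9 ≤ k ∧ k ≤ 4*n-8 := by rcases hk with rfl | rfl <;> omega
    have haw : a w = 2*n-3 := by rcases hcase with ⟨rfl, _⟩ | ⟨rfl, _⟩ <;> omega
    obtain ⟨hm', hne, hc, _⟩ := hF k w
      (hmemcov w k (by omega) (by omega))
    have hcw' : c s(w', w) = 4*n-5 := by
      rcases hcase with ⟨rfl, rfl⟩ | ⟨rfl, rfl⟩
      · exact hww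
      · exact hww'
    have hmm : F k w ∈ Finset.univ.filter (fun v => 2*n-6 ≤ a v) := by
      rcases hk with rfl | rfl
      · rw [← hcov8]; exact hm'
      · rw [← hcov9]; exact hm'
    have hnwa : F k w ≠ wa := by
      intro h
      rcases hcase with ⟨rfl, rfl⟩ | ⟨rfl, rfl⟩
      · exact hne h
      · rw [h] at hc; omega
    have hnwb : F k w ≠ wb := by
      intro h
      rcases hcase with ⟨rfl, rfl⟩ | ⟨rfl, rfl⟩
      · rw [h] at hc; omega
      · exact hne h
    have hnxa : F k w ≠ xa := by
      intro h
      have hcx := hWX w w' hcase xa (Or.inl rfl)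
      rw [h] at hc
      rcases hcx with h' | h' <;> omega
    have hnxb : F k w ≠ xb := by
      intro h
      have hcx := hWX w w' hcase xb (Or.inr rfl)
      rw [h] at hc
      rcases hcx with h' | h' <;> omega
    rcases hC6mem _ hmm with h | h | h | h | h | h
    · exact absurd h hnwa
    · exact absurd h hnwb
    · exact absurd h hnxa
    · exact absurd h hnxb
    · exact Or.inl h
    · exact Or.inr h
  have hWvne : ∀ k, (k = 4*n-8 ∨ k = 4*n-9) → F k wa ≠ F k wb := by
    intro k hk he
    have hkb : 4*n-9 ≤ k ∧ k ≤ 4*n-8 := by rcases hk with rfl | rfl <;> omega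
    obtain ⟨_, hnea, hca, _⟩ := hF k wa
      (hmemcov wa k (by omega) (by omega))
    obtain ⟨_, hneb, hcb, _⟩ := hF k wb
      (hmemcov wb k (by omega) (by omega))
    have hva' := hWv k hk wa wb (Or.inl ⟨rfl, rfl⟩)
    have hOne : wa ≠ F k wa := Ne.symm hnea
    have hOne2 : wb ≠ F k wa := by
      intro hcon
      rcases hva' with h | h
      · rw [h] at hcon; rw [hcon] at hawb; omega
      · rw [h] at hcon; rw [hcon] at hawb; omega
    have e1 : c s(wa, F k wa) = k := by rw [hsym wa (F k wa)]; exact hca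
    have e2 : c s(wb, F k wa) = k := by
      rw [hsym wb (F k wa), he]; exact hcb
    exact hwab (huniq (F k wa) wa wb hOne hOne2 (e1.trans e2.symm))
  -- the edge xa-xb carries both colors 4n-8 and 4n-9 : contradiction
  have hXcol : ∀ k, (k = 4*n-8 ∨ k = 4*n-9) → c s(xb, xa) = k := by
    intro k hk
    have hkb : 4*n-9 ≤ k ∧ k ≤ 4*n-8 := by rcases hk with rfl | rfl <;> omega
    obtain ⟨hm', hne', hc', _⟩ := hF k xa
      (hmemcov xa k (by omega) (by omega))
    have hmm : F k xa ∈ Finset.univ.filter (fun v => 2*n-6 ≤ a v) := by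
      rcases hk with rfl | rfl
      · rw [← hcov8]; exact hm'
      · rw [← hcov9]; exact hm'
    have hnwa' : F k xa ≠ wa := by
      intro h
      have hcx := hWX wa wb (Or.inl ⟨rfl, rfl⟩) xa (Or.inl rfl)
      rw [h, hsym wa xa] at hc'
      rcases hcx with h' | h' <;> omega
    have hnwb' : F k xa ≠ wb := by
      intro h
      have hcx := hWX wb wa (Or.inr ⟨rfl, rfl⟩) xa (Or.inl rfl)
      rw [h, hsym wb xa] at hc'
      rcases hcx with h' | h' <;> omega
    have hnv : ∀ v' : Fin (2*n), a v' = 2*n-6 → (F k wa = v' ∨ F k wb = v') → F k xa ≠ v' := by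
      intro v' hav' hw h
      have hxav' : xa ≠ v' := by intro hcon; rw [hcon, hav'] at haxa; omega
      rcases hw with hw | hw
      · obtain ⟨_, hnea, hca, _⟩ := hF k wa
          (hmemcov wa k (by omega) (by omega))
        rw [hw] at hca
        rw [h] at hc'
        have e1 : c s(xa, v') = k := by rw [hsym xa v']; exact hc'
        have e2 : c s(wa, v') = k := by rw [hsym wa v']; exact hca
        have hwav' : wa ≠ v' := by intro hcon; rw [hcon, hav'] at hawa; omega
        have : xa = wa := huniq v' xa wa hxav' hwav' (e1.trans e2.symm)
        rw [this, hawa] at haxa; omega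
      · obtain ⟨_, hneb, hcb, _⟩ := hF k wb
          (hmemcov wb k (by omega) (by omega))
        rw [hw] at hcb
        rw [h] at hc'
        have e1 : c s(xa, v') = k := by rw [hsym xa v']; exact hc'
        have e2 : c s(wb, v') = k := by rw [hsym wb v']; exact hcb
        have hwbv' : wb ≠ v' := by intro hcon; rw [hcon, hav'] at hawb; omega
        have : xa = wb := huniq v' xa wb hxav' hwbv' (e1.trans e2.symm)
        rw [this, hawb] at haxa; omega
    have hget : ∀ v' : Fin (2*n), (v' = va ∨ v' = vb) → F k wa = v' ∨ F k wb = v' := by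
      intro v' hv'
      have ha' := hWv k hk wa wb (Or.inl ⟨rfl, rfl⟩)
      have hb' := hWv k hk wb wa (Or.inr ⟨rfl, rfl⟩)
      have hne' := hWvne k hk
      rcases hv' with rfl | rfl
      · rcases ha' with h1 | h1
        · exact Or.inl h1
        · rcases hb' with h2 | h2
          · exact Or.inr h2
          · exact absurd (h1.trans h2.symm) hne'
      · rcases ha' with h1 | h1
        · rcases hb' with h2 | h2
          · exact absurd (h1.trans h2.symm) hne'
          · exact Or.inr h2
        · exact Or.inl h1
    have hnva' : F k xa ≠ va := hnv va hava (hget va (Or.inl rfl))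
    have hnvb' : F k xa ≠ vb := hnv vb havb (hget vb (Or.inr rfl))
    rcases hC6mem _ hmm with h | h | h | h | h | h
    · exact absurd h hnwa'
    · exact absurd h hnwb'
    · exact absurd h hne'
    · rw [← h]; exact hc'
    · exact absurd h hnva'
    · exact absurd h hnvb'
  have h8 := hXcol (4*n-8) (Or.inl rfl)
  have h9 := hXcol (4*n-9) (Or.inr rfl)
  omega

/-- `W(K_{2n}) ≤ 4n - 6` for `n ≥ 5`; equivalently there is no interval
`t`-coloring of `K_{2n}` with `t ≥ 4n - 5`. -/
theorem statement_8 (n : ℕ) (hn : 5 ≤ n) :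
    W (2 * n) ≤ 4 * n - 6 ∧
    ∀ t : ℕ, 4 * n - 5 ≤ t →
      ∀ c : Sym2 (Fin (2 * n)) → ℕ, ¬ IsIntervalColoring (2 * n) t c := by
  have h2 : ∀ t : ℕ, 4 * n - 5 ≤ t →
      ∀ c : Sym2 (Fin (2 * n)) → ℕ, ¬ IsIntervalColoring (2 * n) t c :=
    fun t ht c hc => no_coloring n t hn ht c hc
  refine ⟨?_, h2⟩
  apply csSup_le'
  rintro x ⟨c, hc⟩
  by_contra hgt
  push_neg at hgt
  exact h2 x (by omega) c hc
end

section
/- For every integer n ≥ 9, W(K_{2n}) ≤ 4n - 7; equivalently, K_{2n} has no interval t-coloring with t ≥ 4n - 6. -/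
/-!
In an interval coloring of `K_{2n}` every spectrum is `[a v, a v + 2n - 2]`; let `P k` count the
vertices with `a v ≤ k`. For `k ≤ 2n - 1` the edges of color `k` pair up the vertices with
`a v ≤ k`, so `P k` is even; the neighbours of a vertex with `a = 1` give `P k > k`, and the edges
to a vertex with the largest value `A = t - 2n + 2` give `P k ≤ k + 2n - 1 - A`. Counting the
ordered pairs inside `{a ≤ p}` by the color of their edge gives
`∑_{k ≤ H} (2 P(min k p) - P k) ≤ P p (P p - 1)`.

If `t ≥ 4n - 6`, then `A ≥ 2n - 4` and these constraints leave only finitely many shapes of `P`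
on an initial segment, each of which violates the pair count (a finite check). For `n ≤ 11` the
segment is too short and one also uses the reversed coloring `t + 1 - c`, whose counting function
is `k ↦ 2n - P (A - k)`.
-/

open Finset

theorem Finset.even_card_of_involution {α : Type*} {s : Finset α} (g : α → α)
    (hg : ∀ x ∈ s, g x ∈ s) (hgg : ∀ x ∈ s, g (g x) = x) (hne : ∀ x ∈ s, g x ≠ x) :
    Even #s := by
  have h := sum_involution (f := fun _ => (1 : ZMod 2)) (fun x _ => g x)
    (fun _ _ => by decide) (fun x hx _ => hne x hx) hg hgg
  rw [sum_const, nsmul_one] at h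
  exact ZMod.natCast_eq_zero_iff_even.1 h

variable {V : Type*}

lemma ncard_Icc_eq_card_sub_one [Fintype V] {c : Sym2 V → ℕ} {v : V}
    (hinj : Set.InjOn (fun u => c s(u, v)) {v}ᶜ) {lo hi : ℕ}
    (hcolors : {k | ∃ u, u ≠ v ∧ c s(u, v) = k} = Set.Icc lo hi) :
    (Set.Icc lo hi).ncard = Fintype.card V - 1 := by
  have himage : {k | ∃ u, u ≠ v ∧ c s(u, v) = k} = (fun u => c s(u, v)) '' {v}ᶜ := by
    ext k
    simp
  rw [← hcolors, himage, hinj.ncard_image, Set.ncard_compl, Set.ncard_singleton,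
    Nat.card_eq_fintype_card]

structure IsIntervalSpectra (c : Sym2 V → ℕ) (a : V → ℕ) (D : ℕ) : Prop where
  injOn : ∀ v, Set.InjOn (fun u => c s(u, v)) {v}ᶜ
  colors_eq : ∀ v, {k | ∃ u, u ≠ v ∧ c s(u, v) = k} = Set.Icc (a v) (a v + D)

def lowCount [Fintype V] (a : V → ℕ) (k : ℕ) : ℕ := #{v | a v ≤ k}

lemma lowCount_reverse [Fintype V] {a : V → ℕ} {D t : ℕ} (ha : ∀ v, 1 ≤ a v)
    (hat : ∀ v, a v + D ≤ t) (k : ℕ) :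
    lowCount (fun v => t + 1 - (a v + D)) k + lowCount a (t - D - k) = Fintype.card V := by
  have hsplit := card_filter_add_card_filter_not (s := univ) (p := fun v => a v ≤ t - D - k)
  have hcompl : ({v | ¬ a v ≤ t - D - k} : Finset V) =
      ({v | t + 1 - (a v + D) ≤ k} : Finset V) := by
    refine filter_congr fun v _ => ?_
    have := ha v
    have := hat v
    omega
  rw [hcompl, card_univ] at hsplit
  simp only [lowCount]
  omega

namespace IsIntervalSpectra

variable {c : Sym2 V → ℕ} {a : V → ℕ} {D : ℕ}

lemma mem_Icc (h : IsIntervalSpectra c a D) {u v : V} (huv : u ≠ v) :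
    c s(u, v) ∈ Set.Icc (a v) (a v + D) :=
  h.colors_eq v ▸ ⟨u, huv, rfl⟩

lemma exists_color (h : IsIntervalSpectra c a D) {v : V} {k : ℕ}
    (hk : k ∈ Set.Icc (a v) (a v + D)) : ∃ u, u ≠ v ∧ c s(u, v) = k := by
  rwa [← h.colors_eq v] at hk

lemma reverse (h : IsIntervalSpectra c a D) {t : ℕ} (hat : ∀ v, a v + D ≤ t) :
    IsIntervalSpectra (fun e => t + 1 - c e) (fun v => t + 1 - (a v + D)) D where
  injOn v u hu u' hu' huu' := by
    obtain ⟨-, hcu⟩ := h.mem_Icc hu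
    obtain ⟨-, hcu'⟩ := h.mem_Icc hu'
    have := hat v
    exact h.injOn v hu hu' (by simp only at huu' ⊢; omega)
  colors_eq v := by
    ext k
    have := hat v
    constructor
    · rintro ⟨u, hu, rfl⟩
      obtain ⟨h1, h2⟩ := h.mem_Icc hu
      constructor <;> omega
    · rintro ⟨hk1, hk2⟩
      obtain ⟨u, hu, huk⟩ := h.exists_color (v := v) (k := t + 1 - k) ⟨by omega, by omega⟩
      exact ⟨u, hu, by omega⟩

lemma exists_partner (h : IsIntervalSpectra c a D) (ha : ∀ v, 1 ≤ a v) {k : ℕ}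
    (hk : k ≤ D + 1) :
    ∃ f : V → V, ∀ v, a v ≤ k →
      f v ≠ v ∧ c s(f v, v) = k ∧ a (f v) ≤ k ∧ f (f v) = v := by
  have hex : ∀ v, ∃ u, a v ≤ k → u ≠ v ∧ c s(u, v) = k := fun v => by
    by_cases hv : a v ≤ k
    · obtain ⟨u, hu⟩ := h.exists_color (k := k) ⟨hv, by have := ha v; omega⟩
      exact ⟨u, fun _ => hu⟩
    · exact ⟨v, fun hv' => absurd hv' hv⟩
  choose f hf using hex
  have hlow : ∀ v, a v ≤ k → a (f v) ≤ k := fun v hv => by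
    have := (h.mem_Icc (hf v hv).1.symm).1
    rwa [Sym2.eq_swap, (hf v hv).2] at this
  refine ⟨f, fun v hv => ⟨(hf v hv).1, (hf v hv).2, hlow v hv, ?_⟩⟩
  obtain ⟨hne, hcol⟩ := hf (f v) (hlow v hv)
  exact h.injOn (f v) hne (hf v hv).1.symm
    (by simp only; rw [hcol, Sym2.eq_swap, (hf v hv).2])

variable [Fintype V]

lemma even_lowCount (h : IsIntervalSpectra c a D) (ha : ∀ v, 1 ≤ a v) {k : ℕ}
    (hk : k ≤ D + 1) : Even (lowCount a k) := by
  obtain ⟨f, hf⟩ := h.exists_partner ha hk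
  refine even_card_of_involution f (fun v hv => ?_) (fun v hv => ?_) (fun v hv => ?_) <;>
    simp only [mem_filter, mem_univ, true_and] at hv ⊢
  exacts [(hf v hv).2.2.1, (hf v hv).2.2.2, (hf v hv).1]

lemma lt_lowCount (h : IsIntervalSpectra c a D) {u : V} (hu : a u = 1) {k : ℕ} (hk1 : 1 ≤ k)
    (hk : k ≤ D + 1) : k < lowCount a k := by
  classical
  have hsurj : Set.SurjOn (fun w => c s(w, u)) (({v | a v ≤ k} : Finset V).erase u)
      (Icc 1 k) := by
    intro j hj
    rw [mem_coe, Finset.mem_Icc] at hj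
    obtain ⟨w, hw, rfl⟩ := h.exists_color (v := u) (k := j) ⟨by omega, by omega⟩
    have := (h.mem_Icc hw.symm).1
    rw [Sym2.eq_swap] at this
    refine ⟨w, ?_, rfl⟩
    simp only [mem_coe, mem_erase, mem_filter, mem_univ, true_and]
    exact ⟨hw, by omega⟩
  have := card_le_card_of_surjOn _ hsurj
  rw [Nat.card_Icc, card_erase_of_mem (by simp [hu, hk1])] at this
  unfold lowCount
  omega

lemma lowCount_le_sub (h : IsIntervalSpectra c a D) {w : V} {k : ℕ} (hk : k < a w) :
    lowCount a k ≤ k + D + 1 - a w := by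
  have hmaps : Set.MapsTo (fun v => c s(v, w)) ({v | a v ≤ k} : Finset V)
      (Icc (a w) (k + D)) := by
    intro v hv
    simp only [mem_coe, mem_filter, mem_univ, true_and] at hv
    have hvw : v ≠ w := by rintro rfl; omega
    obtain ⟨h1, -⟩ := h.mem_Icc hvw
    obtain ⟨-, h2⟩ := h.mem_Icc hvw.symm
    rw [Sym2.eq_swap] at h2
    simp only [mem_coe, Finset.mem_Icc]
    omega
  have hinj : Set.InjOn (fun v => c s(v, w)) ({v | a v ≤ k} : Finset V) := by
    intro v hv v' hv' hvv'
    simp only [mem_coe, mem_filter, mem_univ, true_and] at hv hv'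
    exact h.injOn w (by rintro rfl; omega) (by rintro rfl; omega) hvv'
  have := card_le_card_of_injOn _ hmaps hinj
  rwa [Nat.card_Icc] at this

/-- The partner map of color `k` is injective on `{a ≤ k}`; the vertices of `{a ≤ min k p}`
whose partner leaves `{a ≤ p}` are sent into `{a ≤ k} \ {a ≤ min k p}`, and the others give
pairs of color `k` inside `{a ≤ p}`. -/
lemma two_mul_lowCount_min_sub_le [DecidableEq V] (h : IsIntervalSpectra c a D)
    (ha : ∀ v, 1 ≤ a v) {k : ℕ} (hk : k ≤ D + 1) (p : ℕ) :
    2 * lowCount a (min k p) - lowCount a k ≤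
      #{q ∈ ({v | a v ≤ p} : Finset V).offDiag | c s(q.1, q.2) = k} := by
  obtain ⟨f, hf⟩ := h.exists_partner ha hk
  unfold lowCount
  set S : Finset V := {v | a v ≤ min k p}
  set L : Finset V := {v | a v ≤ k}
  have hSL : S ⊆ L := by intro v; simp only [S, L, mem_filter, mem_univ, true_and]; omega
  have hgood : #{v ∈ S | a (f v) ≤ p} ≤
      #{q ∈ ({v | a v ≤ p} : Finset V).offDiag | c s(q.1, q.2) = k} := by
    refine card_le_card_of_injOn (fun v => (v, f v)) (fun v hv => ?_)
      (fun v _ v' _ hvv' => congrArg Prod.fst hvv')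
    simp only [S, mem_coe, mem_filter, mem_univ, true_and] at hv
    obtain ⟨hne, hcol, -⟩ := hf v (by omega)
    simp only [mem_coe, mem_offDiag, mem_filter, mem_univ, true_and]
    exact ⟨⟨by omega, hv.2, hne.symm⟩, by rw [Sym2.eq_swap, hcol]⟩
  have hbad : #{v ∈ S | ¬ a (f v) ≤ p} ≤ #(L \ S) := by
    refine card_le_card_of_injOn f (fun v hv => ?_) (fun v hv v' hv' hvv' => ?_)
    · simp only [S, L, mem_coe, mem_filter, mem_sdiff, mem_univ, true_and] at hv ⊢
      exact ⟨(hf v (by omega)).2.2.1, by omega⟩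
    · simp only [S, mem_coe, mem_filter, mem_univ, true_and] at hv hv'
      rw [← (hf v (by omega)).2.2.2, hvv', (hf v' (by omega)).2.2.2]
  have hsplit : #{v ∈ S | a (f v) ≤ p} + #{v ∈ S | ¬ a (f v) ≤ p} = #S :=
    card_filter_add_card_filter_not _
  rw [card_sdiff_of_subset hSL] at hbad
  have := card_le_card hSL
  omega

lemma sum_le_lowCount_mul (h : IsIntervalSpectra c a D) (ha : ∀ v, 1 ≤ a v) {H : ℕ}
    (hH : H ≤ D + 1) (p : ℕ) :
    ∑ k ∈ Icc 1 H, (2 * lowCount a (min k p) - lowCount a k) ≤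
      lowCount a p * (lowCount a p - 1) := by
  classical
  set T : Finset V := {v | a v ≤ p}
  calc ∑ k ∈ Icc 1 H, (2 * lowCount a (min k p) - lowCount a k)
      ≤ ∑ k ∈ Icc 1 H, #{q ∈ T.offDiag | c s(q.1, q.2) = k} :=
        sum_le_sum fun k hk =>
          h.two_mul_lowCount_min_sub_le ha (by rw [Finset.mem_Icc] at hk; omega) p
    _ = #{q ∈ T.offDiag | c s(q.1, q.2) ∈ Icc 1 H} := sum_card_fiberwise_eq_card_filter _ _ _
    _ ≤ #T.offDiag := card_filter_le _ _
    _ = lowCount a p * (lowCount a p - 1) := by rw [offDiag_card, Nat.mul_sub_one]; rfl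

end IsIntervalSpectra

def PairCountBound (P : ℕ → ℕ) (H : ℕ) : Prop :=
  ∀ p ∈ Icc 1 H, ∑ k ∈ Icc 1 H, (2 * P (min k p) - P k) ≤ P p * (P p - 1)

instance (P : ℕ → ℕ) : DecidablePred (PairCountBound P) := fun H =>
  inferInstanceAs (Decidable (∀ p ∈ Icc 1 H, _))

lemma PairCountBound.congr {P P' : ℕ → ℕ} {H : ℕ} (hPP' : ∀ k ∈ Icc 1 H, P k = P' k)
    (hP : PairCountBound P H) : PairCountBound P' H := by
  intro p hp
  rw [← hPP' p hp]
  refine le_of_eq_of_le (sum_congr rfl fun k hk => ?_) (hP p hp)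
  rw [Finset.mem_Icc] at hp hk
  rw [hPP' k (Finset.mem_Icc.2 hk), hPP' (min k p) (Finset.mem_Icc.2 ⟨by omega, by omega⟩)]

/-- What the final count uses about `lowCount a` for an interval coloring of `K_{D + 2}` in which
the latest spectrum starts at color `A`. -/
structure IsProfile (D A : ℕ) (P : ℕ → ℕ) : Prop where
  even : ∀ k ≤ D + 1, Even (P k)
  lt : ∀ k, 1 ≤ k → k ≤ D + 1 → k < P k
  le_sub : ∀ k < A, P k ≤ k + D + 1 - A
  pairCountBound : ∀ H ≤ D + 1, PairCountBound P H

lemma IsIntervalSpectra.isProfile [Fintype V] {c : Sym2 V → ℕ} {a : V → ℕ} {D A : ℕ}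
    (h : IsIntervalSpectra c a D) (ha : ∀ v, 1 ≤ a v) {u w : V} (hu : a u = 1) (hw : a w = A) :
    IsProfile D A (lowCount a) where
  even _ hk := h.even_lowCount ha hk
  lt _ hk1 hk := h.lt_lowCount hu hk1 hk
  le_sub _ hk := hw ▸ h.lowCount_le_sub (hw ▸ hk)
  pairCountBound _ hH p _ := h.sum_le_lowCount_mul ha hH p

/-- If `A + 2 = D`, parity and `k < P k ≤ k + 3` force `P k = k + 2` for even `k < A` and leave
two values for odd `k`, chosen by the bit `k / 2`. -/
def bitProfile {m : ℕ} (b : Fin m → Bool) (k : ℕ) : ℕ :=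
  if h : k % 2 = 1 ∧ k / 2 < m then (if b ⟨k / 2, h.2⟩ then k + 3 else k + 1) else k + 2

def profileBits (P : ℕ → ℕ) (m : ℕ) (i : Fin m) : Bool := P (2 * i + 1) = 2 * i + 4

lemma eq_bitProfile_profileBits {P : ℕ → ℕ} {m k : ℕ} (hkm : k ≤ 2 * m) (hP : Even (P k))
    (hlt : k < P k) (hle : P k ≤ k + 3) : P k = bitProfile (profileBits P m) k := by
  rw [Nat.even_iff] at hP
  unfold bitProfile profileBits
  split_ifs with hodd hbit
  · simp only [decide_eq_true_eq, show 2 * (k / 2) + 1 = k by omega] at hbit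
    omega
  · simp only [decide_eq_true_eq, show 2 * (k / 2) + 1 = k by omega] at hbit
    omega
  · omega

set_option maxRecDepth 10000 in
lemma not_pairCountBound_bitProfile :
    ∀ b : Fin 9 → Bool, ¬ PairCountBound (bitProfile b) 18 := by
  decide

set_option maxRecDepth 10000 in
lemma not_pairCountBound_bitProfile_of_le_eleven {n : ℕ} (hn : 9 ≤ n) (hn' : n ≤ 11)
    (b : Fin (n - 2) → Bool) :
    ¬ (PairCountBound (bitProfile b) (2 * n - 5) ∧
      PairCountBound (fun k => 2 * n - bitProfile b (2 * n - 4 - k)) (2 * n - 5)) := by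
  revert b
  interval_cases n <;> decide

namespace IsProfile

variable {D A : ℕ} {P : ℕ → ℕ}

lemma lt_of_two_lt (hP : IsProfile D A P) (hA : 2 < A) (hD : 1 ≤ D) : A < D := by
  have := Nat.even_iff.1 (hP.even 2 (by omega))
  have := hP.lt 2 (by omega) (by omega)
  have := hP.le_sub 2 hA
  omega

lemma ne_sub_one (hP : IsProfile D A P) (hD : 7 ≤ D) : A ≠ D - 1 := by
  rintro rfl
  have hval : ∀ k ∈ Icc 1 5, P k = 2 * (k / 2) + 2 := by
    intro k hk
    rw [Finset.mem_Icc] at hk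
    have := Nat.even_iff.1 (hP.even k (by omega))
    have := hP.lt k hk.1 (by omega)
    have := hP.le_sub k (by omega)
    omega
  exact absurd ((hP.pairCountBound 5 (by omega)).congr hval) (by decide)

lemma eq_bitProfile (hP : IsProfile D A P) (hA : A + 2 = D) {m k : ℕ} (hk1 : 1 ≤ k)
    (hkA : k < A) (hkm : k ≤ 2 * m) : P k = bitProfile (profileBits P m) k :=
  eq_bitProfile_profileBits hkm (hP.even k (by omega)) (hP.lt k hk1 (by omega))
    (by have := hP.le_sub k hkA; omega)

lemma ne_sub_two (hP : IsProfile D A P) (hD : 21 ≤ D) : A ≠ D - 2 := by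
  rintro rfl
  refine not_pairCountBound_bitProfile (profileBits P 9)
    ((hP.pairCountBound 18 (by omega)).congr fun k hk => ?_)
  rw [Finset.mem_Icc] at hk
  exact hP.eq_bitProfile (by omega) hk.1 (by omega) (by omega)

lemma ne_two_mul_sub_four {n : ℕ} {Q : ℕ → ℕ} (hn : 9 ≤ n) (hn' : n ≤ 11)
    (hP : IsProfile (2 * n - 2) A P) (hQ : IsProfile (2 * n - 2) A Q)
    (hPQ : ∀ k, P (A - k) + Q k = 2 * n) : A ≠ 2 * n - 4 := by
  rintro rfl
  have hPb : ∀ k ∈ Icc 1 (2 * n - 5), P k = bitProfile (profileBits P (n - 2)) k := by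
    intro k hk
    rw [Finset.mem_Icc] at hk
    exact hP.eq_bitProfile (by omega) hk.1 (by omega) (by omega)
  refine not_pairCountBound_bitProfile_of_le_eleven hn hn' (profileBits P (n - 2))
    ⟨(hP.pairCountBound _ (by omega)).congr hPb,
      (hQ.pairCountBound _ (by omega)).congr fun k hk => ?_⟩
  rw [Finset.mem_Icc] at hk
  rw [← hPb (2 * n - 4 - k) (Finset.mem_Icc.2 ⟨by omega, by omega⟩)]
  have := hPQ k
  omega

theorem add_five_le {n : ℕ} {Q : ℕ → ℕ} (hn : 9 ≤ n) (hP : IsProfile (2 * n - 2) A P)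
    (hQ : IsProfile (2 * n - 2) A Q) (hPQ : ∀ k, P (A - k) + Q k = 2 * n) :
    A + 5 ≤ 2 * n := by
  by_contra! hA
  have hA2 : A < 2 * n - 2 := hP.lt_of_two_lt (by omega) (by omega)
  have hA3 : A ≠ 2 * n - 2 - 1 := hP.ne_sub_one (by omega)
  rcases lt_or_ge n 12 with hsmall | hlarge
  · exact hP.ne_two_mul_sub_four hn (by omega) hQ hPQ (by omega)
  · exact hP.ne_sub_two (by omega) (by omega)

end IsProfile

theorem IsIntervalColoring.exists_isIntervalSpectra {m t : ℕ} {c : Sym2 (Fin m) → ℕ}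
    (hc : IsIntervalColoring m t c) (hm : 2 ≤ m) (ht : 1 ≤ t) :
    ∃ a : Fin m → ℕ, IsIntervalSpectra c a (m - 2) ∧ (∀ v, 1 ≤ a v) ∧
      (∀ v, a v + (m - 2) ≤ t) ∧ (∃ u, a u = 1) ∧ ∃ w, a w + (m - 2) = t := by
  obtain ⟨hproper, hrange, hsurj, hint⟩ := hc
  choose lo hi hlohi using hint
  have hinj : ∀ v, Set.InjOn (fun u => c s(u, v)) {v}ᶜ := fun v u hu u' hu' huu' => by
    by_contra hne
    exact hproper v u u' (Ne.symm hu) (Ne.symm hu') hne (by simpa only [Sym2.eq_swap] using huu')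
  have hhi : ∀ v, hi v = lo v + (m - 2) := fun v => by
    have := ncard_Icc_eq_card_sub_one (hinj v) (hlohi v)
    rw [Set.ncard_Icc_nat, Fintype.card_fin] at this
    omega
  have hs : IsIntervalSpectra c lo (m - 2) := ⟨hinj, fun v => hhi v ▸ hlohi v⟩
  have hbounds : ∀ v, 1 ≤ lo v ∧ lo v + (m - 2) ≤ t := fun v => by
    obtain ⟨u, hu, hcu⟩ := hs.exists_color (v := v) (k := lo v) ⟨le_rfl, by omega⟩
    obtain ⟨w, hw, hcw⟩ := hs.exists_color (v := v) (k := lo v + (m - 2)) ⟨by omega, le_rfl⟩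
    have := Finset.mem_Icc.1 (hrange u v hu)
    have := Finset.mem_Icc.1 (hrange w v hw)
    omega
  refine ⟨lo, hs, fun v => (hbounds v).1, fun v => (hbounds v).2, ?_, ?_⟩
  · obtain ⟨u, v, huv, hcol⟩ := hsurj 1 le_rfl ht
    have := (hs.mem_Icc huv).1
    have := (hbounds v).1
    exact ⟨v, by omega⟩
  · obtain ⟨u, v, huv, hcol⟩ := hsurj t ht le_rfl
    have := (hs.mem_Icc huv).2
    have := (hbounds v).2
    exact ⟨v, by omega⟩

theorem not_isIntervalColoring {n t : ℕ} (hn : 9 ≤ n) (ht : 4 * n - 6 ≤ t)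
    (c : Sym2 (Fin (2 * n)) → ℕ) : ¬ IsIntervalColoring (2 * n) t c := by
  intro hc
  obtain ⟨a, hs, ha, hat, ⟨u, hu⟩, ⟨w, hw⟩⟩ :=
    hc.exists_isIntervalSpectra (by omega) (by omega)
  have hP := hs.isProfile ha (w := w) hu rfl
  have hQ := (hs.reverse hat).isProfile (A := a w) (fun v => by have := hat v; omega)
    (u := w) (w := u) (by omega) (by omega)
  have hPQ : ∀ k,
      lowCount a (a w - k) + lowCount (fun v => t + 1 - (a v + (2 * n - 2))) k = 2 * n := by
    intro k
    have := lowCount_reverse ha hat k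
    rw [Fintype.card_fin, show t - (2 * n - 2) - k = a w - k by omega] at this
    omega
  have := hP.add_five_le hn hQ hPQ
  omega

/-- `W(K_{2n}) ≤ 4n - 7` for `n ≥ 9`; equivalently there is no interval
`t`-coloring of `K_{2n}` with `t ≥ 4n - 6`. -/
theorem statement_9 (n : ℕ) (hn : 9 ≤ n) :
    W (2 * n) ≤ 4 * n - 7 ∧
    ∀ t : ℕ, 4 * n - 6 ≤ t →
      ∀ c : Sym2 (Fin (2 * n)) → ℕ, ¬ IsIntervalColoring (2 * n) t c := by
  refine ⟨csSup_le' fun t ⟨c, hc⟩ => ?_, fun t ht c => not_isIntervalColoring hn ht c⟩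
  by_contra! ht
  exact not_isIntervalColoring hn (by omega) c hc
end

section
/- For every positive integer n and every interval t-coloring α of the complete graph K_{2n}, there exists a color c (1 ≤ c ≤ t) such that every vertex of K_{2n} is incident to an edge colored c; that is, the intersection of the spectra of all vertices is nonempty. -/
/-- In every interval coloring of `K_{2n}` some color appears at every
vertex: the intersection of all spectra is nonempty. -/
theorem statement_12 (n t : ℕ) (hn : 1 ≤ n) (c : Sym2 (Fin (2 * n)) → ℕ)
    (hc : IsIntervalColoring (2 * n) t c) :
    ∃ k : ℕ, 1 ≤ k ∧ k ≤ t ∧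
      ∀ v : Fin (2 * n), ∃ u : Fin (2 * n), u ≠ v ∧ c s(u, v) = k := by
  obtain ⟨hprop, hrange, hall, hspec⟩ := hc
  choose a b hab using hspec
  haveI : NeZero (2 * n) := ⟨by omega⟩
  haveI : Nontrivial (Fin (2 * n)) := Fin.nontrivial_iff_two_le.mpr (by omega)
  -- each spectrum is nonempty, so a v ≤ b v
  have hle : ∀ v : Fin (2 * n), a v ≤ b v := by
    intro v
    obtain ⟨u, hu⟩ := exists_ne v
    have hx : c s(u, v) ∈ Set.Icc (a v) (b v) := by
      rw [← hab v]; exact ⟨u, hu, rfl⟩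
    exact le_trans hx.1 hx.2
  -- membership in a spectrum via the interval description
  have hmem : ∀ (v : Fin (2 * n)) (k : ℕ), a v ≤ k → k ≤ b v →
      ∃ u : Fin (2 * n), u ≠ v ∧ c s(u, v) = k := by
    intro v k h1 h2
    have : k ∈ {k : ℕ | ∃ u : Fin (2 * n), u ≠ v ∧ c s(u, v) = k} := by
      rw [hab v]; exact ⟨h1, h2⟩
    exact this
  -- pick v0 maximizing a
  obtain ⟨v0, hv0⟩ := Finite.exists_max a
  refine ⟨a v0, ?_, ?_, ?_⟩
  · obtain ⟨u, hu, hcu⟩ := hmem v0 (a v0) le_rfl (hle v0)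
    have := hrange u v0 hu
    simp only [Finset.mem_Icc] at this
    rw [hcu] at this
    exact this.1
  · obtain ⟨u, hu, hcu⟩ := hmem v0 (a v0) le_rfl (hle v0)
    have := hrange u v0 hu
    simp only [Finset.mem_Icc] at this
    rw [hcu] at this
    exact this.2
  · intro v
    by_cases hv : v = v0
    · subst hv; exact hmem v (a v) le_rfl (hle v)
    · -- the edge s(v0, v) is in both spectra
      have hx1 : c s(v0, v) ∈ Set.Icc (a v) (b v) := by
        rw [← hab v]
        exact ⟨v0, fun h => hv h.symm, rfl⟩
      have hx2 : c s(v0, v) ∈ Set.Icc (a v0) (b v0) := by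
        rw [← hab v0]
        exact ⟨v, hv, by rw [Sym2.eq_swap]⟩
      exact hmem v (a v0) (hv0 v) (hx2.1.trans hx1.2)
end

section
/- Let α be an interval t-coloring of the complete graph K_{2n}. Then for every integer c, the number of vertices v of K_{2n} whose smallest incident color min S(v,α) equals c is even. (In particular, listing the values min S(v,α) over all 2n vertices in nondecreasing order as m_1 ≤ m_2 ≤ … ≤ m_{2n}, one has m_{2i-1} = m_{2i} for every i = 1,…,n.) -/
/-- The smallest color on an edge incident to `v`. -/
noncomputable def minColor (m : ℕ) (c : Sym2 (Fin m) → ℕ) (v : Fin m) : ℕ :=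
  sInf {k : ℕ | ∃ u : Fin m, u ≠ v ∧ c s(u, v) = k}

/-- The list `m_1 ≤ m_2 ≤ … ≤ m_{2n}` of smallest incident colors of the
vertices, in nondecreasing order. -/
noncomputable def sortedMins (m : ℕ) (c : Sym2 (Fin m) → ℕ) : List ℕ :=
  ((Finset.univ : Finset (Fin m)).val.map (minColor m c)).sort (· ≤ ·)

/-- The `i`-th entry `b_i = m_{2i+1} - m_{2i-1}` of the shift vector of a
coloring of `K_{2n}` (1-based positions; `m_j` is the `j`-th sorted smallest
incident color). Meaningful for `1 ≤ i ≤ n-1`. -/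
noncomputable def shiftVec (n : ℕ) (c : Sym2 (Fin (2 * n)) → ℕ) (i : ℕ) : ℕ :=
  (sortedMins (2 * n) c).getD (2 * i) 0 - (sortedMins (2 * n) c).getD (2 * i - 2) 0

/-! Each color class is a matching, so for every color `j` the number of vertices whose spectrum
contains `j` is even. In `K_{2n}` the spectrum of `v` is the interval `[a v, a v + 2n - 2]` with
`a v = minColor v`, so that number is `N j - N (j - (2n - 1))`, where `N j = #{v | a v ≤ j}`.
Strong induction on `j` makes every `N j` even, hence so is `#{v | a v = j} = N j - N (j - 1)`. -/

open Finset

theorem even_card_filter_eq_of_even_card_window {ι : Type*} (s : Finset ι) (a : ι → ℕ) {d : ℕ}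
    (hd : 0 < d) (h : ∀ k, Even #{i ∈ s | a i ≤ k ∧ k < a i + d}) (k : ℕ) :
    Even #{i ∈ s | a i = k} := by
  have hle : ∀ k, Even #{i ∈ s | a i ≤ k} := by
    intro k
    induction k using Nat.strong_induction_on with | _ k ih =>
    rcases lt_or_ge k d with hk | hk
    · convert h k using 3 with i
      omega
    · have hsplit : #{i ∈ s | a i ≤ k} =
          #{i ∈ s | a i ≤ k ∧ k < a i + d} + #{i ∈ s | a i ≤ k - d} := by
        rw [← card_filter_add_card_filter_not (s := {i ∈ s | a i ≤ k}) (fun i => k < a i + d),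
          filter_filter, filter_filter]
        congr 2
        exact filter_congr fun i _ => by omega
      rw [hsplit]
      exact (h k).add (ih (k - d) (by omega))
  cases k with
  | zero => simpa only [Nat.le_zero] using hle 0
  | succ k =>
    have hsplit : #{i ∈ s | a i ≤ k + 1} = #{i ∈ s | a i = k + 1} + #{i ∈ s | a i ≤ k} := by
      rw [← card_filter_add_card_filter_not (s := {i ∈ s | a i ≤ k + 1}) (fun i => a i = k + 1),
        filter_filter, filter_filter]
      congr 2 <;> exact filter_congr fun i _ => by omega
    have := hle (k + 1)
    rw [hsplit] at this
    exact (Nat.even_add.mp this).mpr (hle k)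

section ProperEdgeColoring

variable {V : Type*} [Fintype V] [DecidableEq V]

def IsProperEdgeColoring (c : Sym2 V → ℕ) : Prop :=
  ∀ u v w : V, u ≠ v → u ≠ w → v ≠ w → c s(u, v) ≠ c s(u, w)

def colorSpectrum (c : Sym2 V → ℕ) (v : V) : Finset ℕ :=
  (univ.erase v).image fun u => c s(u, v)

variable {c : Sym2 V → ℕ}

theorem coe_colorSpectrum (v : V) :
    (colorSpectrum c v : Set ℕ) = {k | ∃ u, u ≠ v ∧ c s(u, v) = k} := by
  ext k
  simp [colorSpectrum]

theorem IsProperEdgeColoring.card_colorSpectrum (hc : IsProperEdgeColoring c) (v : V) :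
    #(colorSpectrum c v) = Fintype.card V - 1 := by
  rw [colorSpectrum, card_image_of_injOn, card_erase_of_mem (mem_univ v), card_univ]
  intro u hu w hw huw
  by_contra hne
  refine hc v u w (Ne.symm (by simpa using hu)) (Ne.symm (by simpa using hw)) hne ?_
  simpa only [Sym2.eq_swap (a := v)] using huw

theorem IsProperEdgeColoring.even_card_mem_colorSpectrum (hc : IsProperEdgeColoring c) (k : ℕ) :
    Even #{v | k ∈ colorSpectrum c v} := by
  classical
  let G := SimpleGraph.fromEdgeSet {e | c e = k}
  have hdeg_le : ∀ v, G.degree v ≤ 1 := by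
    intro v
    rw [← G.card_neighborFinset_eq_degree, card_le_one]
    intro u hu w hw
    simp only [SimpleGraph.mem_neighborFinset, G, SimpleGraph.fromEdgeSet_adj,
      Set.mem_ofPred_eq] at hu hw
    by_contra hne
    exact hc v u w hu.2 hw.2 hne (hu.1.trans hw.1.symm)
  have hmem : ∀ v, k ∈ colorSpectrum c v ↔ 0 < G.degree v := by
    intro v
    rw [G.degree_pos_iff_exists_adj]
    simp only [colorSpectrum, mem_image, mem_erase, mem_univ, and_true, G,
      SimpleGraph.fromEdgeSet_adj, Set.mem_ofPred_eq, Sym2.eq_swap (a := v)]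
    exact exists_congr fun u => by tauto
  convert G.even_card_odd_degree_vertices using 3 with v
  rw [hmem, Nat.odd_iff]
  have := hdeg_le v
  omega

end ProperEdgeColoring

theorem IsIntervalColoring.colorSpectrum_eq_Icc {m t : ℕ} {c : Sym2 (Fin m) → ℕ}
    (hc : IsIntervalColoring m t c) (hm : 2 ≤ m) (v : Fin m) :
    colorSpectrum c v = Icc (minColor m c v) (minColor m c v + (m - 2)) := by
  obtain ⟨a, b, hab⟩ := hc.2.2.2 v
  have hspec : colorSpectrum c v = Icc a b := by
    rw [← coe_inj, coe_colorSpectrum, hab, coe_Icc]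
  have hcard := IsProperEdgeColoring.card_colorSpectrum hc.1 v
  rw [hspec, Nat.card_Icc, Fintype.card_fin] at hcard
  have hmin : minColor m c v = a := by
    rw [minColor, ← coe_colorSpectrum, hspec, coe_Icc, csInf_Icc (by omega)]
  rw [hspec, hmin]
  congr 1
  omega

/-- In an interval coloring of `K_{2n}`, for every color `k` the number of
vertices whose smallest incident color equals `k` is even. -/
theorem statement_13 (n t : ℕ) (c : Sym2 (Fin (2 * n)) → ℕ)
    (hc : IsIntervalColoring (2 * n) t c) (k : ℕ) :
    Even ({v : Fin (2 * n) | minColor (2 * n) c v = k}.ncard) := by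
  rcases Nat.eq_zero_or_pos n with rfl | hn
  · simp [Set.eq_empty_of_isEmpty]
  have hwindow : ∀ j v, j ∈ colorSpectrum c v ↔
      minColor (2 * n) c v ≤ j ∧ j < minColor (2 * n) c v + (2 * n - 1) := by
    intro j v
    rw [hc.colorSpectrum_eq_Icc (by omega), mem_Icc]
    omega
  rw [Set.ncard_eq_toFinset_card', Set.toFinset_ofPred]
  refine even_card_filter_eq_of_even_card_window univ _ (by omega : 0 < 2 * n - 1) (fun j => ?_) k
  simpa only [hwindow] using IsProperEdgeColoring.even_card_mem_colorSpectrum hc.1 j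
end

section
/- Let α be an interval t-coloring of K_{2n} with shift vector (b_1, b_2, …, b_{n-1}). Then for every k with 1 ≤ k ≤ n-1, b_1 + b_2 + … + b_k ≤ 2k - 1. -/
open Finset

lemma List.Pairwise.getD_le_getD {α : Type*} [Preorder α] {L : List α} {d : α}
    (hL : L.Pairwise (· ≤ ·)) {i j : ℕ} (hij : i ≤ j) (hj : j < L.length) :
    L.getD i d ≤ L.getD j d := by
  rw [List.getD_eq_getElem _ _ (hij.trans_lt hj), List.getD_eq_getElem _ _ hj]
  exact hL.rel_get_of_le (a := ⟨i, hij.trans_lt hj⟩) (b := ⟨j, hj⟩) hij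

lemma List.Pairwise.getD_le_of_lt_countP {α : Type*} [LinearOrder α] {L : List α} {d : α}
    (hL : L.Pairwise (· ≤ ·)) {x : α} {j : ℕ} (hj : j < L.countP (· ≤ x)) :
    L.getD j d ≤ x := by
  induction L generalizing j with
  | nil => simp at hj
  | cons a L ih =>
    have hax : a ≤ x := by
      by_contra hxa
      have : (a :: L).countP (· ≤ x) = 0 := by
        refine List.countP_eq_zero.2 fun b hb => ?_
        have hab : a ≤ b := by
          rcases List.mem_cons.1 hb with rfl | hb
          exacts [le_rfl, List.rel_of_pairwise_cons hL hb]
        simpa using (lt_of_not_ge hxa).trans_le hab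
      omega
    cases j with
    | zero => simpa using hax
    | succ j =>
      rw [List.countP_cons_of_pos (by simpa using hax)] at hj
      exact ih hL.of_cons (by omega)

lemma sum_Icc_tsub_pred_eq {f : ℕ → ℕ} {k : ℕ} (hf : MonotoneOn f (Set.Iic k)) :
    ∑ i ∈ Icc 1 k, (f i - f (i - 1)) = f k - f 0 := by
  induction k with
  | zero => simp
  | succ k ih =>
    have hk : f k ≤ f (k + 1) := hf (by simp) (by simp) k.le_succ
    have h0 : f 0 ≤ f k := hf (by simp) (by simp) k.zero_le
    rw [sum_Icc_succ_top (by omega), ih (hf.mono (Set.Iic_subset_Iic.2 k.le_succ)),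
      Nat.add_sub_cancel]
    omega

def incidentColors (m : ℕ) (c : Sym2 (Fin m) → ℕ) (v : Fin m) : Set ℕ :=
  {k | ∃ u : Fin m, u ≠ v ∧ c s(u, v) = k}

section Coloring

variable {m t : ℕ} {c : Sym2 (Fin m) → ℕ}

lemma incidentColors_nonempty (hm : 2 ≤ m) (v : Fin m) : (incidentColors m c v).Nonempty := by
  obtain ⟨u, hu⟩ := Fintype.exists_ne_of_one_lt_card (by rw [Fintype.card_fin]; exact hm) v
  exact ⟨_, u, hu, rfl⟩

lemma minColor_mem_incidentColors (hm : 2 ≤ m) (v : Fin m) :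
    minColor m c v ∈ incidentColors m c v :=
  Nat.sInf_mem (incidentColors_nonempty hm v)

lemma minColor_le {u v : Fin m} (huv : u ≠ v) : minColor m c v ≤ c s(u, v) :=
  Nat.sInf_le ⟨u, huv, rfl⟩

namespace IsIntervalColoring

variable (hc : IsIntervalColoring m t c)
include hc

lemma one_le_of_mem_incidentColors {v : Fin m} {k : ℕ} (hk : k ∈ incidentColors m c v) :
    1 ≤ k := by
  obtain ⟨u, huv, rfl⟩ := hk
  exact (mem_Icc.1 (hc.2.1 u v huv)).1

lemma one_le_minColor (hm : 2 ≤ m) (v : Fin m) : 1 ≤ minColor m c v :=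
  hc.one_le_of_mem_incidentColors (minColor_mem_incidentColors hm v)

lemma injOn_color_at (v : Fin m) : Set.InjOn (fun u => c s(u, v)) {u | u ≠ v} := by
  intro u₁ hu₁ u₂ hu₂ h
  by_contra hne
  refine hc.1 v u₁ u₂ (Ne.symm hu₁) (Ne.symm hu₂) hne ?_
  simpa only [Sym2.eq_swap (a := v)] using h

lemma exists_Icc_subset_incidentColors (hm : 2 ≤ m) :
    ∃ v, Set.Icc 1 (m - 1) ⊆ incidentColors m c v := by
  have ht : 1 ≤ t := by
    obtain ⟨u, v, huv⟩ := Fintype.exists_pair_of_one_lt_card (by rw [Fintype.card_fin]; exact hm)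
    obtain ⟨h₁, h₂⟩ := mem_Icc.1 (hc.2.1 u v huv)
    exact h₁.trans h₂
  obtain ⟨u₁, v, hu₁, hcol⟩ := hc.2.2.1 1 le_rfl ht
  obtain ⟨a, b, hab⟩ := hc.2.2.2 v
  have hone : 1 ∈ Set.Icc a b := hab ▸ ⟨u₁, hu₁, hcol⟩
  -- the `m - 1` colors at `v` are distinct and lie in `[1, b]`
  have hb : m - 1 ≤ b := by
    have := card_le_card_of_injOn (s := univ.erase v) (t := Icc 1 b) (fun u => c s(u, v))
      (fun u hu => by
        have hcu : c s(u, v) ∈ Set.Icc a b := hab ▸ ⟨u, ne_of_mem_erase hu, rfl⟩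
        exact mem_Icc.2 ⟨hc.one_le_of_mem_incidentColors ⟨u, ne_of_mem_erase hu, rfl⟩, hcu.2⟩)
      ((hc.injOn_color_at v).mono fun u hu => ne_of_mem_erase hu)
    simpa using this
  refine ⟨v, fun j hj => ?_⟩
  change j ∈ {k | ∃ u : Fin m, u ≠ v ∧ c s(u, v) = k}
  rw [hab]
  exact ⟨hone.1.trans hj.1, hj.2.trans hb⟩

lemma card_minColor_le (hm : 2 ≤ m) {x : ℕ} (hx₁ : 1 ≤ x) (hx : x ≤ m - 1) :
    x + 1 ≤ #{w | minColor m c w ≤ x} := by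
  obtain ⟨v, hv⟩ := hc.exists_Icc_subset_incidentColors hm
  have hcolors : ∀ j, 1 ≤ j → j ≤ x → ∃ u, u ≠ v ∧ c s(u, v) = j := fun j hj₁ hj =>
    hv ⟨hj₁, hj.trans hx⟩
  -- `v` is hit by `0`, and the neighbour of `v` along the color `j` by `j`
  have hsurj : Set.SurjOn (fun w => if w = v then 0 else c s(w, v))
      ({w | minColor m c w ≤ x} : Finset (Fin m)) (range (x + 1)) := by
    intro j hj
    have hjx : j ≤ x := Nat.lt_succ_iff.1 (mem_range.1 hj)
    simp only [coe_filter, mem_univ, true_and, Set.mem_image]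
    rcases Nat.eq_zero_or_pos j with rfl | hj₀
    · obtain ⟨u, huv, hu⟩ := hcolors 1 le_rfl hx₁
      exact ⟨v, ((minColor_le huv).trans_eq hu).trans hx₁, if_pos rfl⟩
    · obtain ⟨u, huv, hu⟩ := hcolors j hj₀ hjx
      have hu' : minColor m c u ≤ j := 
        (minColor_le huv.symm).trans_eq (by rw [Sym2.eq_swap, hu])
      exact ⟨u, hu'.trans hjx, by simp [huv, hu]⟩
  simpa using card_le_card_of_surjOn _ hsurj

end IsIntervalColoring

end Coloring

section SortedMins

variable {m t : ℕ} {c : Sym2 (Fin m) → ℕ}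

lemma pairwise_sortedMins : (sortedMins m c).Pairwise (· ≤ ·) := Multiset.pairwise_sort _ _

lemma length_sortedMins : (sortedMins m c).length = m := by
  simp [sortedMins]

lemma mem_sortedMins {a : ℕ} : a ∈ sortedMins m c ↔ ∃ w, minColor m c w = a := by
  simp [sortedMins]

lemma countP_sortedMins (x : ℕ) :
    (sortedMins m c).countP (· ≤ x) = #{w | minColor m c w ≤ x} := by
  rw [sortedMins, ← Multiset.coe_countP, Multiset.sort_eq, Multiset.countP_map]
  rfl

lemma IsIntervalColoring.one_le_getD_sortedMins_zero (hc : IsIntervalColoring m t c)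
    (hm : 2 ≤ m) : 1 ≤ (sortedMins m c).getD 0 0 := by
  have hlen : 0 < (sortedMins m c).length := by rw [length_sortedMins]; omega
  obtain ⟨w, hw⟩ := mem_sortedMins.1 (List.getD_eq_getElem _ 0 hlen ▸ List.getElem_mem hlen)
  exact hw ▸ hc.one_le_minColor hm w

lemma IsIntervalColoring.getD_sortedMins_le (hc : IsIntervalColoring m t c)
    (hm : 2 ≤ m) {x : ℕ} (hx₁ : 1 ≤ x) (hx : x ≤ m - 1) : (sortedMins m c).getD x 0 ≤ x :=
  pairwise_sortedMins.getD_le_of_lt_countP <| by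
    rw [countP_sortedMins]
    exact hc.card_minColor_le hm hx₁ hx

end SortedMins

/-- `b_1 + ⋯ + b_k ≤ 2k - 1` for every `1 ≤ k ≤ n-1`, where `(b_i)` is the
shift vector of an interval coloring of `K_{2n}`. -/
theorem statement_14 (n t : ℕ) (c : Sym2 (Fin (2 * n)) → ℕ)
    (hc : IsIntervalColoring (2 * n) t c) :
    ∀ k : ℕ, 1 ≤ k → k ≤ n - 1 →
      ∑ i ∈ Finset.Icc 1 k, shiftVec n c i ≤ 2 * k - 1 := by
  intro k hk₁ hk
  have hm : 2 ≤ 2 * n := by omega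
  -- `m i` is the paper's `m_{2i+1}`
  set m := fun i => (sortedMins (2 * n) c).getD (2 * i) 0
  have hmono : MonotoneOn m (Set.Iic k) := fun i _ j hj hij =>
    pairwise_sortedMins.getD_le_getD (by omega) (by rw [length_sortedMins]; have := Set.mem_Iic.1 hj; omega)
  have htelescope : ∑ i ∈ Icc 1 k, shiftVec n c i = m k - m 0 := by
    rw [← sum_Icc_tsub_pred_eq hmono]
    refine sum_congr rfl fun i _ => ?_
    simp only [shiftVec, m, Nat.mul_sub_one]
  have hlast : m k ≤ 2 * k := hc.getD_sortedMins_le hm (by omega) (by omega)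
  have hfirst : 1 ≤ m 0 := hc.one_le_getD_sortedMins_zero hm
  omega
end

section
/- Let α be an interval t-coloring of K_{2n} with shift vector (b_1, b_2, …, b_{n-1}). Then for every k with 2 ≤ k ≤ n-2, k(2k-1) ≥ Σ_{i=1}^{k} i·b_i + Σ_{i=k+1}^{min(2k-1, n-1)} (2k-i)·b_i. -/
/-!
Let `S` be `2k` vertices with the smallest minimal colors. As long as not every vertex has
started its spectrum by color `x`, the vertices that have are exactly those with minimal color
`≤ x`, and the color class `x` is a perfect matching on them. For `m_{2i-1} ≤ x < m_{2i+1}` there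
are therefore `2i` of them, and at least `2 min(i, 2k - i)` vertices of `S` are matched inside `S`
by color `x`. Summing over `x` counts each ordered pair of vertices of `S` at most once, so
`Σ 2 min(i, 2k - i) b_i ≤ 2k(2k - 1)`.
-/

open Finset

namespace List

lemma Pairwise.getElem_le_iff_lt_countP {α : Type*} [LinearOrder α] {L : List α}
    (hL : L.Pairwise (· ≤ ·)) {j : ℕ} (hj : j < L.length) (x : α) :
    L[j] ≤ x ↔ j < L.countP (· ≤ x) := by
  induction L generalizing j with
  | nil => simp at hj
  | cons y L ih =>
    obtain ⟨hy, hL⟩ := List.pairwise_cons.mp hL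
    by_cases hyx : y ≤ x
    · cases j with
      | zero => simp [hyx]
      | succ j => simp [hyx, ih hL (by simpa using hj)]
    · have hL0 : L.countP (· ≤ x) = 0 :=
        List.countP_eq_zero.mpr fun z hz hzx => hyx ((hy z hz).trans (by simpa using hzx))
      cases j with
      | zero => simp [hyx, hL0]
      | succ j =>
        simp only [List.getElem_cons_succ, List.countP_cons, hL0, hyx, decide_false]
        exact iff_of_false (fun h => hyx ((hy _ (List.getElem_mem _)).trans h)) (by simp)

end List

namespace Finset

variable {α : Type*}

lemma even_card_of_involution_s15 [LinearOrder α] (s : Finset α) (p : α → α)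
    (hmaps : ∀ a ∈ s, p a ∈ s) (hinv : ∀ a ∈ s, p (p a) = a) (hne : ∀ a ∈ s, p a ≠ a) :
    Even #s := by
  have hsplit := card_filter_add_card_filter_not (s := s) (fun a => a < p a)
  have hswap : #{a ∈ s | ¬a < p a} = #{a ∈ s | a < p a} := by
    refine card_nbij' p p ?_ ?_ ?_ ?_ <;> intro a ha <;>
      simp only [coe_filter, Set.mem_ofPred_eq, not_lt] at ha ⊢
    · rw [hinv a ha.1]; exact ⟨hmaps a ha.1, lt_of_le_of_ne ha.2 (hne a ha.1)⟩
    · rw [hinv a ha.1]; exact ⟨hmaps a ha.1, ha.2.le⟩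
    · exact hinv a ha.1
    · exact hinv a ha.1
  exact ⟨#{a ∈ s | a < p a}, by omega⟩

lemma card_inter_le_card_filter_add_card_sdiff [DecidableEq α] (S V : Finset α) (p : α → α)
    (hmaps : ∀ a ∈ V, p a ∈ V) (hinv : ∀ a ∈ V, p (p a) = a) :
    #(S ∩ V) ≤ #{a ∈ S ∩ V | p a ∈ S} + #(V \ S) := by
  have hsplit := card_filter_add_card_filter_not (s := S ∩ V) (fun a => p a ∈ S)
  have hescape : #{a ∈ S ∩ V | p a ∉ S} ≤ #(V \ S) := by
    refine card_le_card_of_injOn p (fun a ha => ?_) (fun a ha b hb hab => ?_)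
    · simp only [coe_filter, mem_inter, Set.mem_ofPred_eq] at ha
      exact mem_sdiff.mpr ⟨hmaps a ha.1.2, ha.2⟩
    · simp only [coe_filter, mem_inter, Set.mem_ofPred_eq] at ha hb
      rw [← hinv a ha.1.2, ← hinv b hb.1.2, hab]
  omega

lemma exists_card_eq_forall_le {β : Type*} [Fintype α] [DecidableEq α] [LinearOrder β]
    (a : α → β) {j : ℕ} (hj : j ≤ Fintype.card α) :
    ∃ S : Finset α, #S = j ∧ ∀ v ∈ S, ∀ w ∉ S, a v ≤ a w := by
  induction j with
  | zero => exact ⟨∅, rfl, by simp⟩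
  | succ j ih =>
    obtain ⟨S, hS, hlow⟩ := ih (by omega)
    have hne : Sᶜ.Nonempty := by
      rw [← card_pos, card_compl]; omega
    obtain ⟨w, hw, hwmin⟩ := exists_min_image Sᶜ a hne
    refine ⟨insert w S, by rw [card_insert_of_notMem (by simpa using hw), hS], ?_⟩
    intro v hv u hu
    rw [mem_insert, not_or] at hu
    rcases mem_insert.mp hv with rfl | hv
    · exact hwmin u (by simpa using hu.2)
    · exact hlow v hv u hu.2

lemma card_inter_filter_le_eq_min {β : Type*} [Fintype α] [DecidableEq α] [LinearOrder β]
    {a : α → β} {S : Finset α} (hS : ∀ v ∈ S, ∀ w ∉ S, a v ≤ a w) (x : β) :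
    #(S ∩ ({v | a v ≤ x} : Finset α)) = min #S #({v | a v ≤ x} : Finset α) := by
  by_cases hsub : S ⊆ ({v | a v ≤ x} : Finset α)
  · rw [inter_eq_left.mpr hsub, min_eq_left (card_le_card hsub)]
  · obtain ⟨v, hvS, hv⟩ := not_subset.mp hsub
    have hsup : ({v | a v ≤ x} : Finset α) ⊆ S := fun w hw => by
      by_contra hwS
      simp only [mem_filter, mem_univ, true_and] at hv hw
      exact hv ((hS v hvS w hwS).trans hw)
    rw [inter_eq_right.mpr hsup, min_eq_right (card_le_card hsup)]

lemma sum_Ico_eq_sum_Ioc_sum_Ico {M : Type*} [AddCommMonoid M] (f : ℕ → M) (h : ℕ → ℕ)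
    (K : ℕ) (hh : MonotoneOn h (Set.Iic K)) :
    ∑ x ∈ Ico (h 0) (h K), f x = ∑ i ∈ Ioc 0 K, ∑ x ∈ Ico (h (i - 1)) (h i), f x := by
  induction K with
  | zero => simp
  | succ K ih =>
    rw [sum_Ioc_succ_top (Nat.zero_le K), ← ih (hh.mono (Set.Iic_subset_Iic.mpr K.le_succ)),
      Nat.add_sub_cancel, sum_Ico_consecutive]
    · exact hh (by simp) (by simp) (Nat.zero_le K)
    · exact hh (by simp) (by simp) K.le_succ

end Finset

section MatchedWithin

variable {α β : Type*} [DecidableEq α] [DecidableEq β]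

def matchedWithin (c : Sym2 α → β) (S : Finset α) (x : β) : Finset α :=
  {v ∈ S | ∃ u ∈ S, u ≠ v ∧ c s(u, v) = x}

lemma mem_matchedWithin {c : Sym2 α → β} {S : Finset α} {x : β} {v : α} :
    v ∈ matchedWithin c S x ↔ v ∈ S ∧ ∃ u ∈ S, u ≠ v ∧ c s(u, v) = x :=
  mem_filter

lemma sum_card_matchedWithin_le (c : Sym2 α → β) (S : Finset α) (T : Finset β) :
    ∑ x ∈ T, #(matchedWithin c S x) ≤ #S * (#S - 1) := by
  let r : α → β → Prop := fun v x => ∃ u ∈ S, u ≠ v ∧ c s(u, v) = x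
  calc ∑ x ∈ T, #(matchedWithin c S x) = ∑ v ∈ S, #(T.bipartiteAbove r v) :=
        (sum_card_bipartiteAbove_eq_sum_card_bipartiteBelow r).symm
    _ ≤ ∑ _v ∈ S, (#S - 1) := by
        refine sum_le_sum fun v hv => ?_
        calc #(T.bipartiteAbove r v) ≤ #((S.erase v).image fun u => c s(u, v)) := by
              refine card_le_card fun x hx => ?_
              obtain ⟨-, u, hu, huv, rfl⟩ := (mem_bipartiteAbove r).mp hx
              exact mem_image_of_mem _ (mem_erase.mpr ⟨huv, hu⟩)
          _ ≤ #S - 1 := card_image_le.trans (card_erase_of_mem hv).le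
    _ = #S * (#S - 1) := by rw [sum_const, smul_eq_mul]

end MatchedWithin

/-- The other endpoint of the edge of color `x` at `v`; junk value `v` if there is none. -/
noncomputable def partner {m : ℕ} (c : Sym2 (Fin m) → ℕ) (v : Fin m) (x : ℕ) : Fin m :=
  if h : ∃ u, u ≠ v ∧ c s(u, v) = x then h.choose else v

lemma partner_spec {m : ℕ} {c : Sym2 (Fin m) → ℕ} {v : Fin m} {x : ℕ}
    (h : ∃ u, u ≠ v ∧ c s(u, v) = x) : partner c v x ≠ v ∧ c s(partner c v x, v) = x := by
  rw [partner, dif_pos h]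
  exact h.choose_spec

lemma sortedMins_getD_le_iff {m : ℕ} (c : Sym2 (Fin m) → ℕ) {j : ℕ} (hj : j < m) (x : ℕ) :
    (sortedMins m c).getD j 0 ≤ x ↔ j < #{v | minColor m c v ≤ x} := by
  have hlen : j < (sortedMins m c).length := by simpa [sortedMins, Multiset.length_sort] using hj
  have hcount : (sortedMins m c).countP (· ≤ x) = #{v | minColor m c v ≤ x} := by
    rw [← Multiset.coe_countP, sortedMins, Multiset.sort_eq, Multiset.countP_map]
    rfl
  have hsorted : (sortedMins m c).Pairwise (· ≤ ·) := Multiset.pairwise_sort _ _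
  rw [List.getD_eq_getElem _ _ hlen, hsorted.getElem_le_iff_lt_countP hlen, hcount]

namespace IsIntervalColoring

variable {m t : ℕ} {c : Sym2 (Fin m) → ℕ}

lemma eq_of_color_eq (hc : IsIntervalColoring m t c) {u v w : Fin m} (hu : u ≠ v) (hw : w ≠ v)
    (h : c s(u, v) = c s(w, v)) : u = w := by
  by_contra huw
  exact hc.1 v u w hu.symm hw.symm huw (by rwa [Sym2.eq_swap, Sym2.eq_swap (a := v)])

lemma partner_partner (hc : IsIntervalColoring m t c) {v : Fin m} {x : ℕ}
    (h : ∃ u, u ≠ v ∧ c s(u, v) = x) : partner c (partner c v x) x = v := by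
  obtain ⟨hne, hcol⟩ := partner_spec h
  have h' : ∃ u, u ≠ partner c v x ∧ c s(u, partner c v x) = x :=
    ⟨v, hne.symm, by rwa [Sym2.eq_swap]⟩
  obtain ⟨hne', hcol'⟩ := partner_spec h'
  exact hc.eq_of_color_eq hne' hne.symm (by rw [hcol', Sym2.eq_swap, hcol])

lemma exists_color_iff (hc : IsIntervalColoring m t c) (hm : 2 ≤ m) (v : Fin m) (x : ℕ) :
    (∃ u, u ≠ v ∧ c s(u, v) = x) ↔ minColor m c v ≤ x ∧ x ≤ minColor m c v + (m - 2) := by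
  obtain ⟨a, b, hab⟩ := hc.2.2.2 v
  have hrange : {k | ∃ u, u ≠ v ∧ c s(u, v) = k} =
      Set.range fun u : {u : Fin m // u ≠ v} => c s(u.1, v) := by
    ext k; simp
  have hinj : Function.Injective fun u : {u : Fin m // u ≠ v} => c s(u.1, v) :=
    fun u w h => Subtype.ext (hc.eq_of_color_eq u.2 w.2 h)
  have hcard : b + 1 - a = m - 1 := by
    rw [← Nat.card_Icc, ← Set.ncard_coe_finset, coe_Icc, ← hab, hrange, ← Nat.card_coe_set_eq,
      Nat.card_range_of_injective hinj, Nat.card_eq_fintype_card, Fintype.card_subtype_compl]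
    simp
  have hmin : minColor m c v = a := by
    rw [minColor, hab, csInf_Icc (by omega)]
  change x ∈ {k | ∃ u, u ≠ v ∧ c s(u, v) = k} ↔ _
  rw [hab, hmin, Set.mem_Icc]
  omega

/-- If the spectrum of `v` had ended before `x`, every other vertex would be joined to `v` by a
color below `x`, so all `m` vertices would have started their spectra by `x`. -/
lemma exists_color_of_card_lt (hc : IsIntervalColoring m t c) (hm : 2 ≤ m) {x : ℕ}
    (hcard : #{u | minColor m c u ≤ x} < m) {v : Fin m} (hv : minColor m c v ≤ x) :
    ∃ u, u ≠ v ∧ c s(u, v) = x := by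
  refine (hc.exists_color_iff hm v x).mpr ⟨hv, not_lt.mp fun hlt => hcard.ne ?_⟩
  rw [filter_true_of_mem, card_univ, Fintype.card_fin]
  intro u _
  rcases eq_or_ne u v with rfl | huv
  · exact hv
  have hu := (hc.exists_color_iff hm u (c s(u, v))).mp ⟨v, huv.symm, congrArg c Sym2.eq_swap⟩
  have hv' := (hc.exists_color_iff hm v (c s(u, v))).mp ⟨u, huv, rfl⟩
  omega

lemma minColor_partner_le (hc : IsIntervalColoring m t c) (hm : 2 ≤ m) {x : ℕ}
    (hcard : #{u | minColor m c u ≤ x} < m) {v : Fin m} (hv : minColor m c v ≤ x) :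
    minColor m c (partner c v x) ≤ x := by
  obtain ⟨hne, hcol⟩ := partner_spec (hc.exists_color_of_card_lt hm hcard hv)
  exact ((hc.exists_color_iff hm _ x).mp ⟨v, hne.symm, by rwa [Sym2.eq_swap]⟩).1

lemma even_card_filter_minColor_le (hc : IsIntervalColoring m t c) (hm : 2 ≤ m) {x : ℕ}
    (hcard : #{u | minColor m c u ≤ x} < m) : Even #{u | minColor m c u ≤ x} := by
  refine even_card_of_involution_s15 _ (partner c · x) (fun v hv => ?_) (fun v hv => ?_)
    (fun v hv => ?_) <;> simp only [mem_filter, mem_univ, true_and] at hv ⊢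
  · exact hc.minColor_partner_le hm hcard hv
  · exact hc.partner_partner (hc.exists_color_of_card_lt hm hcard hv)
  · exact (partner_spec (hc.exists_color_of_card_lt hm hcard hv)).1

lemma card_filter_minColor_le_eq (hc : IsIntervalColoring m t c) (hm : 2 ≤ m) {i x : ℕ}
    (hi : 1 ≤ i) (him : 2 * i < m) (hx : (sortedMins m c).getD (2 * i - 2) 0 ≤ x)
    (hx' : x < (sortedMins m c).getD (2 * i) 0) : #{u | minColor m c u ≤ x} = 2 * i := by
  have hlower := (sortedMins_getD_le_iff c (by omega) x).mp hx
  have hupper : #{u | minColor m c u ≤ x} ≤ 2 * i :=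
    not_lt.mp fun h => hx'.not_ge ((sortedMins_getD_le_iff c him x).mpr h)
  obtain ⟨r, hr⟩ := hc.even_card_filter_minColor_le hm (x := x) (by omega)
  omega

/-- The color class `x` is a perfect matching of `V`, the vertices whose spectrum has started
by `x`, so at most `#(V \ S)` vertices of `S ∩ V` are matched outside `S`. -/
lemma two_mul_min_card_le (hc : IsIntervalColoring m t c) (hm : 2 ≤ m) {x : ℕ}
    (hcard : #{u | minColor m c u ≤ x} < m) {S : Finset (Fin m)}
    (hS : ∀ v ∈ S, ∀ w ∉ S, minColor m c v ≤ minColor m c w) :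
    2 * min #S #{u | minColor m c u ≤ x} ≤
      #(matchedWithin c S x) + #{u | minColor m c u ≤ x} := by
  set V : Finset (Fin m) := {u | minColor m c u ≤ x} with hV
  have hmaps : ∀ v ∈ V, partner c v x ∈ V := fun v hv =>
    mem_filter.mpr ⟨mem_univ _, hc.minColor_partner_le hm hcard (mem_filter.mp hv).2⟩
  have hinv : ∀ v ∈ V, partner c (partner c v x) x = v := fun v hv =>
    hc.partner_partner (hc.exists_color_of_card_lt hm hcard (mem_filter.mp hv).2)
  have hmatched : {v ∈ S ∩ V | partner c v x ∈ S} ⊆ matchedWithin c S x := fun v hv => by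
    obtain ⟨hvSV, hpS⟩ := mem_filter.mp hv
    obtain ⟨hne, hcol⟩ :=
      partner_spec (hc.exists_color_of_card_lt hm hcard (mem_filter.mp (mem_inter.mp hvSV).2).2)
    exact mem_matchedWithin.mpr ⟨(mem_inter.mp hvSV).1, _, hpS, hne, hcol⟩
  have hlow := card_inter_le_card_filter_add_card_sdiff S V _ hmaps hinv
  have hsplit := card_inter_add_card_sdiff V S
  rw [card_inter_filter_le_eq_min hS x, ← hV] at hlow
  rw [inter_comm, card_inter_filter_le_eq_min hS x, ← hV] at hsplit
  have := card_le_card hmatched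
  omega

end IsIntervalColoring

lemma IsIntervalColoring.sum_min_mul_shiftVec_le {n t : ℕ} {c : Sym2 (Fin (2 * n)) → ℕ}
    (hc : IsIntervalColoring (2 * n) t c) {k K : ℕ} (hk : k ≤ n) (hK : K < n) :
    ∑ i ∈ Ioc 0 K, min i (2 * k - i) * shiftVec n c i ≤ k * (2 * k - 1) := by
  have hm : 2 ≤ 2 * n := by omega
  obtain ⟨S, hScard, hS⟩ := exists_card_eq_forall_le (minColor (2 * n) c) (j := 2 * k)
    (by rw [Fintype.card_fin]; omega)
  set h : ℕ → ℕ := fun i => (sortedMins (2 * n) c).getD (2 * i) 0 with hh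
  have hshift : ∀ i, shiftVec n c i = h i - h (i - 1) := fun i => by
    rw [shiftVec, hh, show 2 * i - 2 = 2 * (i - 1) by omega]
  have hmono : MonotoneOn h (Set.Iic K) := fun i _ j hj hij => by
    rw [Set.mem_Iic] at hj
    have := (sortedMins_getD_le_iff c (j := 2 * j) (by omega) (h j)).mp le_rfl
    exact (sortedMins_getD_le_iff c (by omega) _).mpr (by omega)
  have hper : ∀ i ∈ Ioc 0 K, ∀ x ∈ Ico (h (i - 1)) (h i),
      2 * min i (2 * k - i) ≤ #(matchedWithin c S x) := by
    intro i hi x hx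
    rw [mem_Ioc] at hi
    rw [mem_Ico] at hx
    have hV := hc.card_filter_minColor_le_eq hm hi.1 (by omega)
      (by rw [show 2 * i - 2 = 2 * (i - 1) by omega]; exact hx.1) hx.2
    have := hc.two_mul_min_card_le hm (x := x) (by omega) hS
    rw [hV, hScard] at this
    omega
  have hdouble : 2 * ∑ i ∈ Ioc 0 K, min i (2 * k - i) * shiftVec n c i ≤ 2 * (k * (2 * k - 1)) :=
    calc 2 * ∑ i ∈ Ioc 0 K, min i (2 * k - i) * shiftVec n c i
        = ∑ i ∈ Ioc 0 K, ∑ _x ∈ Ico (h (i - 1)) (h i), 2 * min i (2 * k - i) := by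
          rw [mul_sum]
          refine sum_congr rfl fun i _ => ?_
          rw [sum_const, Nat.card_Ico, smul_eq_mul, hshift]
          ring
      _ ≤ ∑ i ∈ Ioc 0 K, ∑ x ∈ Ico (h (i - 1)) (h i), #(matchedWithin c S x) :=
          sum_le_sum fun i hi => sum_le_sum (hper i hi)
      _ = ∑ x ∈ Ico (h 0) (h K), #(matchedWithin c S x) :=
          (sum_Ico_eq_sum_Ioc_sum_Ico _ h K hmono).symm
      _ ≤ #S * (#S - 1) := sum_card_matchedWithin_le c S _
      _ = 2 * (k * (2 * k - 1)) := by rw [hScard]; ring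
  omega

/-- `k(2k-1) ≥ Σ_{i=1}^{k} i b_i + Σ_{i=k+1}^{min(2k-1,n-1)} (2k-i) b_i`
for every `2 ≤ k ≤ n-2`, where `(b_i)` is the shift vector of an interval
coloring of `K_{2n}`. -/
theorem statement_15 (n t : ℕ) (c : Sym2 (Fin (2 * n)) → ℕ)
    (hc : IsIntervalColoring (2 * n) t c) :
    ∀ k : ℕ, 2 ≤ k → k ≤ n - 2 →
      ∑ i ∈ Finset.Icc 1 k, i * shiftVec n c i +
        ∑ i ∈ Finset.Icc (k + 1) (min (2 * k - 1) (n - 1)), (2 * k - i) * shiftVec n c i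
      ≤ k * (2 * k - 1) := by
  intro k hk hkn
  set K := min (2 * k - 1) (n - 1)
  have hsplit : ∑ i ∈ Icc 1 k, i * shiftVec n c i +
      ∑ i ∈ Icc (k + 1) K, (2 * k - i) * shiftVec n c i =
        ∑ i ∈ Ioc 0 K, min i (2 * k - i) * shiftVec n c i := by
    rw [← sum_Ioc_consecutive _ (Nat.zero_le k) (by omega : k ≤ K),
      ← Icc_add_one_left_eq_Ioc, ← Icc_add_one_left_eq_Ioc]
    congr 1 <;> refine sum_congr rfl fun i hi => ?_ <;> rw [mem_Icc] at hi <;> congr 1 <;> omega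
  rw [hsplit]
  exact hc.sum_min_mul_shiftVec_le (by omega) (by omega)
end
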